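/- arXiv:2103.13144 — 11 statements merged into one kernel-verified Lean document; each statement's English description precedes it below -/
import Mathlib

section
/- Let Γ be an irreducible migration matrix of size n. Then 0 is an eigenvalue of Γ of algebraic multiplicity one, and every nonzero eigenvalue of Γ (over ℂ) has strictly negative real part. -/
open Finset Matrix Polynomial Module

namespace Stmt0Aux

variable {n : ℕ}

lemma align_step (Γ : Matrix (Fin n) (Fin n) ℝ)
    (hoff : ∀ i j : Fin n, i ≠ j → 0 ≤ Γ i j)
    (hdiag : ∀ i : Fin n, Γ i i = -∑ j ∈ univ.erase i, Γ j i)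
    (v : Fin n → ℂ)
    (hv : (Γ.map (Complex.ofReal ·))ᵀ.mulVec v = 0)
    (i : Fin n) (hmax : ∀ j, ‖v j‖ ≤ ‖v i‖) :
    ∀ j, 0 < Γ j i → v j = v i := by
  have h0 : ∑ j, (Γ j i : ℂ) * v j = 0 := by
    have := congrFun hv i
    simpa [Matrix.mulVec, dotProduct, Matrix.transpose_apply, Matrix.map_apply] using this
  have hsplit : (Γ i i : ℂ) * v i + ∑ j ∈ univ.erase i, (Γ j i : ℂ) * v j = 0 := by
    rw [Finset.add_sum_erase univ (fun j => (Γ j i : ℂ) * v j) (mem_univ i)]; exact h0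
  have hdiagC : (Γ i i : ℂ) = -∑ j ∈ univ.erase i, (Γ j i : ℂ) := by
    rw [← Complex.ofReal_sum]; exact_mod_cast congrArg Complex.ofReal (hdiag i)
  have hkey : ∑ j ∈ univ.erase i, (Γ j i : ℂ) * (v j - v i) = 0 := by
    have : ∑ j ∈ univ.erase i, (Γ j i : ℂ) * (v j - v i)
        = (∑ j ∈ univ.erase i, (Γ j i : ℂ) * v j) - (∑ j ∈ univ.erase i, (Γ j i : ℂ)) * v i := by
      rw [Finset.sum_mul, ← Finset.sum_sub_distrib]
      exact Finset.sum_congr rfl fun j _ => by ring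
    rw [this]
    have := hsplit
    rw [hdiagC] at this
    linear_combination this
  -- real parts
  have hre : ∑ j ∈ univ.erase i, Γ j i * ((v j * (starRingEnd ℂ) (v i)).re - Complex.normSq (v i)) = 0 := by
    have := congrArg (fun z : ℂ => (z * (starRingEnd ℂ) (v i)).re) hkey
    simp only [zero_mul, Complex.zero_re, Finset.sum_mul] at this
    rw [← this, Complex.re_sum]
    refine Finset.sum_congr rfl fun j _ => ?_
    have : ((Γ j i : ℂ) * (v j - v i) * (starRingEnd ℂ) (v i)) = (Γ j i : ℂ) * (v j * (starRingEnd ℂ) (v i) - v i * (starRingEnd ℂ) (v i)) := by ring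
    rw [this, Complex.re_ofReal_mul, Complex.sub_re, Complex.mul_conj]
    norm_num
  have hterm : ∀ j ∈ univ.erase i, Γ j i * ((v j * (starRingEnd ℂ) (v i)).re - Complex.normSq (v i)) ≤ 0 := by
    intro j hj
    have hji : j ≠ i := Finset.ne_of_mem_erase hj
    have h1 : 0 ≤ Γ j i := hoff j i hji
    have h2 : (v j * (starRingEnd ℂ) (v i)).re ≤ Complex.normSq (v i) := by
      calc (v j * (starRingEnd ℂ) (v i)).re ≤ ‖v j * (starRingEnd ℂ) (v i)‖ :=
            Complex.re_le_norm _
        _ = ‖v j‖ * ‖v i‖ := by rw [norm_mul, Complex.norm_conj]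
        _ ≤ ‖v i‖ * ‖v i‖ := by
            exact mul_le_mul_of_nonneg_right (hmax j) (norm_nonneg _)
        _ = Complex.normSq (v i) := by rw [← Complex.sq_norm]; ring
    nlinarith
  have hzero := (Finset.sum_eq_zero_iff_of_nonpos hterm).mp hre
  intro j hΓ
  by_cases hji : j = i
  · rw [hji]
  · have hj : j ∈ univ.erase i := Finset.mem_erase.mpr ⟨hji, mem_univ j⟩
    have := hzero j hj
    have hre_eq : (v j * (starRingEnd ℂ) (v i)).re = Complex.normSq (v i) := by
      have hΓ' : Γ j i ≠ 0 := ne_of_gt hΓ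
      rcases mul_eq_zero.mp this with h | h
      · exact absurd h hΓ'
      · linarith
    have hns : Complex.normSq (v j - v i) ≤ 0 := by
      rw [Complex.normSq_sub, hre_eq]
      have : Complex.normSq (v j) ≤ Complex.normSq (v i) := by
        rw [← Complex.sq_norm, ← Complex.sq_norm]
        exact pow_le_pow_left₀ (norm_nonneg _) (hmax j) 2
      linarith
    have := Complex.normSq_nonneg (v j - v i)
    have : Complex.normSq (v j - v i) = 0 := le_antisymm hns this
    have := Complex.normSq_eq_zero.mp this
    exact sub_eq_zero.mp this


lemma ker_const (hn : 0 < n) (Γ : Matrix (Fin n) (Fin n) ℝ)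
    (hoff : ∀ i j : Fin n, i ≠ j → 0 ≤ Γ i j)
    (hdiag : ∀ i : Fin n, Γ i i = -∑ j ∈ univ.erase i, Γ j i)
    (hirr : ∀ i j : Fin n, i ≠ j → Relation.TransGen (fun a b : Fin n => 0 < Γ b a) i j)
    (v : Fin n → ℂ)
    (hv : (Γ.map (Complex.ofReal ·))ᵀ.mulVec v = 0) :
    ∃ c : ℂ, ∀ j, v j = c := by
  obtain ⟨i₀, -, hmax⟩ := Finset.exists_max_image univ (fun j => ‖v j‖)
    ⟨⟨0, hn⟩, mem_univ _⟩
  have hmax' : ∀ j, ‖v j‖ ≤ ‖v i₀‖ := fun j => hmax j (mem_univ j)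
  have key : ∀ j, Relation.TransGen (fun a b : Fin n => 0 < Γ b a) i₀ j → v j = v i₀ := by
    intro j h
    induction h with
    | single h => exact align_step Γ hoff hdiag v hv i₀ hmax' _ h
    | @tail b c hab hbc ih =>
        have hmaxb : ∀ k, ‖v k‖ ≤ ‖v b‖ := by
          rw [ih]; exact hmax'
        rw [align_step Γ hoff hdiag v hv b hmaxb _ hbc]; exact ih
  refine ⟨v i₀, fun j => ?_⟩
  by_cases hj : j = i₀
  · rw [hj]
  · exact key j (hirr i₀ j (Ne.symm hj))


lemma col_sum_zero (Γ : Matrix (Fin n) (Fin n) ℝ)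
    (hdiag : ∀ i : Fin n, Γ i i = -∑ j ∈ univ.erase i, Γ j i) (i : Fin n) :
    ∑ j, Γ j i = 0 := by
  rw [← Finset.add_sum_erase univ (fun j => Γ j i) (mem_univ i), hdiag i]
  ring


lemma exists_pos_ker (hn : 0 < n) (Γ : Matrix (Fin n) (Fin n) ℝ)
    (hoff : ∀ i j : Fin n, i ≠ j → 0 ≤ Γ i j)
    (hdiag : ∀ i : Fin n, Γ i i = -∑ j ∈ univ.erase i, Γ j i)
    (hirr : ∀ i j : Fin n, i ≠ j → Relation.TransGen (fun a b : Fin n => 0 < Γ b a) i j) :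
    ∃ π : Fin n → ℝ, Γ.mulVec π = 0 ∧ ∀ i, 0 < π i := by
  -- determinant is zero
  have h1 : Γᵀ.mulVec (fun _ => (1:ℝ)) = 0 := by
    funext i
    simp only [Matrix.mulVec, dotProduct, Matrix.transpose_apply, mul_one, Pi.zero_apply]
    exact col_sum_zero Γ hdiag i
  have hdetT : Γᵀ.det = 0 := by
    rw [← Matrix.exists_mulVec_eq_zero_iff]
    exact ⟨fun _ => 1, fun h => one_ne_zero (congrFun h ⟨0, hn⟩), h1⟩
  have hdet : Γ.det = 0 := by rwa [Matrix.det_transpose] at hdetT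
  obtain ⟨u, hu0, hu⟩ := Matrix.exists_mulVec_eq_zero_iff.mpr hdet
  -- setup
  set c : ℝ := 1 + ∑ i, -Γ i i with hc
  have hdiag_nonneg : ∀ i, 0 ≤ -Γ i i := by
    intro i
    rw [hdiag i, neg_neg]
    exact Finset.sum_nonneg fun j hj => hoff j i (Finset.ne_of_mem_erase hj)
  have hcΓ : ∀ i, 1 ≤ c + Γ i i := by
    intro i
    have : -Γ i i ≤ ∑ i, -Γ i i :=
      Finset.single_le_sum (fun j _ => hdiag_nonneg j) (mem_univ i)
    simp only [hc]; linarith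
  set A : Matrix (Fin n) (Fin n) ℝ := fun i j => (if i = j then c else 0) + Γ i j with hA
  have hAnn : ∀ i j, 0 ≤ A i j := by
    intro i j
    by_cases h : i = j
    · subst h
      have h2 : A i i = c + Γ i i := by simp [hA]
      rw [h2]; linarith [hcΓ i]
    · simp only [hA, if_neg h, zero_add]; exact hoff i j h
  have hcol : ∀ j, ∑ i, A i j = c := by
    intro j
    simp only [hA]
    rw [Finset.sum_add_distrib, col_sum_zero Γ hdiag j, Finset.sum_ite_eq' univ j (fun _ => c)]
    simp
  have hAu : ∀ i, ∑ j, A i j * u j = c * u i := by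
    intro i
    have hΓu : ∑ j, Γ i j * u j = 0 := congrFun hu i
    simp only [hA, add_mul, Finset.sum_add_distrib, hΓu, add_zero, ite_mul, zero_mul]
    rw [Finset.sum_ite_eq univ i (fun j => c * u j)]
    simp
  set π : Fin n → ℝ := fun i => |u i| with hπ
  have hg0 : ∀ i, c * π i ≤ ∑ j, A i j * π j := by
    intro i
    have hcpos : 0 < c := by
      have := Finset.sum_nonneg (fun i (_ : i ∈ univ) => hdiag_nonneg i); simp only [hc]; linarith
    calc c * π i = |c * u i| := by
          rw [abs_mul, abs_of_pos hcpos]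
      _ = |∑ j, A i j * u j| := by rw [hAu i]
      _ ≤ ∑ j, |A i j * u j| := Finset.abs_sum_le_sum_abs _ _
      _ = ∑ j, A i j * π j := by
          refine Finset.sum_congr rfl fun j _ => ?_
          rw [abs_mul, abs_of_nonneg (hAnn i j)]
  have hsum : ∑ i, (∑ j, A i j * π j - c * π i) = 0 := by
    rw [Finset.sum_sub_distrib, Finset.sum_comm]
    have : ∀ j, ∑ i, A i j * π j = c * π j := by
      intro j; rw [← Finset.sum_mul, hcol j]
    rw [Finset.sum_congr rfl fun j _ => this j]
    exact sub_self _
  have heach : ∀ i ∈ univ, ∑ j, A i j * π j - c * π i = 0 :=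
    (Finset.sum_eq_zero_iff_of_nonneg (fun i _ => by linarith [hg0 i])).mp hsum
  have hAπ : ∀ i, ∑ j, A i j * π j = c * π i := by
    intro i; have := heach i (mem_univ i); linarith
  have hΓπ : Γ.mulVec π = 0 := by
    funext i
    have h2 : ∑ j, A i j * π j = c * π i + ∑ j, Γ i j * π j := by
      simp only [hA, add_mul, Finset.sum_add_distrib, ite_mul, zero_mul]
      rw [Finset.sum_ite_eq univ i (fun j => c * π j)]
      simp
    have := hAπ i
    simp only [Matrix.mulVec, dotProduct, Pi.zero_apply]
    rw [h2] at this
    linarith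
  -- positivity
  have hclosure : ∀ i, π i = 0 → ∀ j, 0 < Γ i j → π j = 0 := by
    intro i hi j hΓij
    by_cases hij : j = i
    · rwa [hij]
    · have h0 : ∑ j, A i j * π j = 0 := by rw [hAπ i, hi, mul_zero]
      have hterm := (Finset.sum_eq_zero_iff_of_nonneg
        (fun j _ => mul_nonneg (hAnn i j) (abs_nonneg (u j)))).mp h0 j (mem_univ j)
      have hne : ¬ (i = j) := fun h => hij h.symm
      have hApos : 0 < A i j := by
        simp only [hA, if_neg hne, zero_add]; exact hΓij
      have := mul_eq_zero.mp hterm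
      rcases this with h | h
      · exact absurd h (ne_of_gt hApos)
      · exact h
  obtain ⟨k, hk⟩ := Function.ne_iff.mp hu0
  have hπk : 0 < π k := abs_pos.mpr hk
  refine ⟨π, hΓπ, fun i => ?_⟩
  rcases lt_or_eq_of_le (abs_nonneg (u i)) with h | h
  · exact h
  · exfalso
    have hπi : π i = 0 := h.symm
    by_cases hik : i = k
    · rw [hik] at hπi; rw [hπi] at hπk; exact lt_irrefl 0 hπk
    · have htg := hirr k i (fun h => hik h.symm)
      have : π k = 0 := by
        refine Relation.TransGen.head_induction_on (motive := fun a _ => π a = 0) htg ?_ ?_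
        · intro a h; exact hclosure i hπi a h
        · intro a b h _ hb; exact hclosure b hb a h
      rw [this] at hπk; exact lt_irrefl 0 hπk


lemma ker_sq (hn : 0 < n) (Γ : Matrix (Fin n) (Fin n) ℝ)
    (hoff : ∀ i j : Fin n, i ≠ j → 0 ≤ Γ i j)
    (hdiag : ∀ i : Fin n, Γ i i = -∑ j ∈ univ.erase i, Γ j i)
    (hirr : ∀ i j : Fin n, i ≠ j → Relation.TransGen (fun a b : Fin n => 0 < Γ b a) i j)
    (w : Fin n → ℂ)
    (hker : (Γ.map (Complex.ofReal ·))ᵀ.mulVec w = 0)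
    (hrange : ∃ v, (Γ.map (Complex.ofReal ·))ᵀ.mulVec v = w) :
    w = 0 := by
  obtain ⟨c, hc⟩ := ker_const hn Γ hoff hdiag hirr w hker
  obtain ⟨π, hπ, hπpos⟩ := exists_pos_ker hn Γ hoff hdiag hirr
  obtain ⟨v, hv⟩ := hrange
  have key : ∑ i, (π i : ℂ) * w i = 0 := by
    have : ∀ i, w i = ∑ j, (Γ j i : ℂ) * v j := by
      intro i
      rw [← hv]
      simp [Matrix.mulVec, dotProduct, Matrix.transpose_apply, Matrix.map_apply]
    calc ∑ i, (π i : ℂ) * w i = ∑ i, ∑ j, (π i : ℂ) * ((Γ j i : ℂ) * v j) := by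
          refine Finset.sum_congr rfl fun i _ => ?_
          rw [this i, Finset.mul_sum]
      _ = ∑ j, (∑ i, (Γ j i : ℂ) * (π i : ℂ)) * v j := by
          rw [Finset.sum_comm]
          refine Finset.sum_congr rfl fun j _ => ?_
          rw [Finset.sum_mul]
          exact Finset.sum_congr rfl fun i _ => by ring
      _ = 0 := by
          refine Finset.sum_eq_zero fun j _ => ?_
          have : ∑ i, (Γ j i : ℂ) * (π i : ℂ) = ((Γ.mulVec π j : ℝ) : ℂ) := by
            simp [Matrix.mulVec, dotProduct]
          rw [this, hπ]
          simp
  have hsum : (∑ i, (π i : ℂ)) * c = 0 := by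
    rw [← key, Finset.sum_mul]
    exact Finset.sum_congr rfl fun i _ => by rw [hc i]
  have hπsum : (0:ℝ) < ∑ i, π i :=
    Finset.sum_pos (fun i _ => hπpos i) ⟨⟨0, hn⟩, mem_univ _⟩
  have hc0 : c = 0 := by
    rcases mul_eq_zero.mp hsum with h | h
    · exfalso
      have : (∑ i, (π i : ℂ)) = ((∑ i, π i : ℝ) : ℂ) := by push_cast; ring
      rw [this] at h
      exact (ne_of_gt hπsum) (by exact_mod_cast h)
    · exact h
  funext i
  rw [hc i, hc0]; rfl


lemma ker_pow (hn : 0 < n) (Γ : Matrix (Fin n) (Fin n) ℝ)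
    (hoff : ∀ i j : Fin n, i ≠ j → 0 ≤ Γ i j)
    (hdiag : ∀ i : Fin n, Γ i i = -∑ j ∈ univ.erase i, Γ j i)
    (hirr : ∀ i j : Fin n, i ≠ j → Relation.TransGen (fun a b : Fin n => 0 < Γ b a) i j)
    (k : ℕ) (hk : 1 ≤ k) (v : Fin n → ℂ)
    (hv : ((Γ.map (Complex.ofReal ·))ᵀ ^ k).mulVec v = 0) :
    (Γ.map (Complex.ofReal ·))ᵀ.mulVec v = 0 := by
  induction k generalizing v with
  | zero => omega
  | succ k ih =>
    rcases Nat.eq_or_lt_of_le hk with h | h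
    · rw [← h, pow_one] at hv; exact hv
    · have hk1 : 1 ≤ k := by omega
      have hstep : ((Γ.map (Complex.ofReal ·))ᵀ ^ k).mulVec
          ((Γ.map (Complex.ofReal ·))ᵀ.mulVec v) = 0 := by
        rw [Matrix.mulVec_mulVec, ← pow_succ]
        exact hv
      have h2 := ih hk1 _ hstep
      exact ker_sq hn Γ hoff hdiag hirr _ h2 ⟨v, rfl⟩


lemma det_of_isRoot (A : Matrix (Fin n) (Fin n) ℂ) (μ : ℂ) (h : A.charpoly.IsRoot μ) :
    (Matrix.diagonal (fun _ => μ) - A).det = 0 := by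
  have h1 : (evalRingHom μ) A.charpoly = 0 := h
  rw [Matrix.charpoly, RingHom.map_det] at h1
  convert h1 using 2
  ext i j
  by_cases hij : i = j
  · subst hij
    simp [Matrix.charmatrix_apply_eq]
  · simp [Matrix.charmatrix_apply_ne _ _ _ hij, Matrix.diagonal_apply_ne _ hij]


lemma exists_eigvec (A : Matrix (Fin n) (Fin n) ℂ) (μ : ℂ) (h : A.charpoly.IsRoot μ) :
    ∃ v : Fin n → ℂ, v ≠ 0 ∧ Aᵀ.mulVec v = μ • v := by
  have h1 := det_of_isRoot A μ h
  have h2 : (Matrix.diagonal (fun _ => μ) - Aᵀ).det = 0 := by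
    rw [← Matrix.det_transpose, Matrix.transpose_sub, Matrix.diagonal_transpose]
    exact h1
  obtain ⟨v, hv0, hv⟩ := Matrix.exists_mulVec_eq_zero_iff.mpr h2
  refine ⟨v, hv0, ?_⟩
  rw [Matrix.sub_mulVec] at hv
  have : Matrix.diagonal (fun _ => μ) *ᵥ v = μ • v := by
    funext i
    simp [Matrix.mulVec_diagonal]
  rw [this] at hv
  have := sub_eq_zero.mp hv
  exact this.symm


lemma re_neg (hn : 0 < n) (Γ : Matrix (Fin n) (Fin n) ℝ)
    (hoff : ∀ i j : Fin n, i ≠ j → 0 ≤ Γ i j)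
    (hdiag : ∀ i : Fin n, Γ i i = -∑ j ∈ univ.erase i, Γ j i)
    (μ : ℂ) (hroot : (Γ.map (Complex.ofReal ·)).charpoly.IsRoot μ) (hμ : μ ≠ 0) :
    μ.re < 0 := by
  obtain ⟨v, hv0, hv⟩ := exists_eigvec (Γ.map (Complex.ofReal ·)) μ hroot
  obtain ⟨i, -, hmax⟩ := Finset.exists_max_image univ (fun j => ‖v j‖)
    ⟨⟨0, hn⟩, mem_univ _⟩
  have hmax' : ∀ j, ‖v j‖ ≤ ‖v i‖ := fun j => hmax j (mem_univ j)
  have hvi : 0 < ‖v i‖ := by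
    obtain ⟨k, hk⟩ := Function.ne_iff.mp hv0
    exact lt_of_lt_of_le (by simpa using hk : 0 < ‖v k‖) (hmax' k)
  have hrow : ∑ j, (Γ j i : ℂ) * v j = μ * v i := by
    have := congrFun hv i
    simpa [Matrix.mulVec, dotProduct, Matrix.transpose_apply, Matrix.map_apply] using this
  have hsplit : (μ - (Γ i i : ℂ)) * v i = ∑ j ∈ univ.erase i, (Γ j i : ℂ) * v j := by
    rw [← Finset.add_sum_erase univ (fun j => (Γ j i : ℂ) * v j) (mem_univ i)] at hrow
    linear_combination -hrow
  have habs : ‖μ - (Γ i i : ℂ)‖ * ‖v i‖ ≤ (-Γ i i) * ‖v i‖ := by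
    calc ‖μ - (Γ i i : ℂ)‖ * ‖v i‖
        = ‖(μ - (Γ i i : ℂ)) * v i‖ := (norm_mul _ _).symm
      _ = ‖∑ j ∈ univ.erase i, (Γ j i : ℂ) * v j‖ := by rw [hsplit]
      _ ≤ ∑ j ∈ univ.erase i, ‖(Γ j i : ℂ) * v j‖ := norm_sum_le _ _
      _ ≤ ∑ j ∈ univ.erase i, Γ j i * ‖v i‖ := by
          refine Finset.sum_le_sum fun j hj => ?_
          rw [norm_mul, Complex.norm_real, Real.norm_eq_abs,
            abs_of_nonneg (hoff j i (Finset.ne_of_mem_erase hj))]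
          exact mul_le_mul_of_nonneg_left (hmax' j) (hoff j i (Finset.ne_of_mem_erase hj))
      _ = (-Γ i i) * ‖v i‖ := by
          rw [← Finset.sum_mul, hdiag i, neg_neg]
  have habs2 : ‖μ - (Γ i i : ℂ)‖ ≤ -Γ i i :=
    le_of_mul_le_mul_right habs hvi
  have hΓii : Γ i i ≤ 0 := by
    have : 0 ≤ ‖μ - (Γ i i : ℂ)‖ := norm_nonneg _
    linarith
  have hns : (μ.re - Γ i i)^2 + μ.im^2 ≤ (Γ i i)^2 := by
    have h2 : ‖μ - (Γ i i : ℂ)‖^2 ≤ (-Γ i i)^2 :=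
      pow_le_pow_left₀ (norm_nonneg _) habs2 2
    rw [Complex.sq_norm, Complex.normSq_apply] at h2
    simp only [Complex.sub_re, Complex.ofReal_re, Complex.sub_im, Complex.ofReal_im, sub_zero] at h2
    nlinarith [h2]
  have hnsq : 0 < μ.re^2 + μ.im^2 := by
    have := Complex.normSq_pos.mpr hμ
    rwa [Complex.normSq_apply, ← pow_two, ← pow_two] at this
  by_contra hre
  push_neg at hre
  nlinarith


lemma mulVecLin_pow (A : Matrix (Fin n) (Fin n) ℂ) (k : ℕ) :
    (A.mulVecLin) ^ k = (A ^ k).mulVecLin := by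
  induction k with
  | zero => rw [pow_zero, pow_zero, Matrix.mulVecLin_one]; rfl
  | succ k ih => rw [pow_succ, pow_succ, Matrix.mulVecLin_mul, ih]; rfl


lemma rank_nullity (A : Matrix (Fin n) (Fin n) ℂ) :
    finrank ℂ (LinearMap.ker A.mulVecLin) + A.rank = n := by
  have h := LinearMap.finrank_range_add_finrank_ker A.mulVecLin
  rw [Module.finrank_fin_fun] at h
  unfold Matrix.rank
  omega

end Stmt0Aux

open Stmt0Aux

/-- Let Γ be an irreducible migration matrix of size n. Then 0 is an
eigenvalue of Γ of algebraic multiplicity one, and every nonzero eigenvalue of Γ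
(over ℂ) has strictly negative real part. -/
theorem stmt_0 {n : ℕ} (hn : 0 < n) (Γ : Matrix (Fin n) (Fin n) ℝ)
    (hoff : ∀ i j : Fin n, i ≠ j → 0 ≤ Γ i j)
    (hdiag : ∀ i : Fin n, Γ i i = -∑ j ∈ univ.erase i, Γ j i)
    (hirr : ∀ i j : Fin n, i ≠ j → Relation.TransGen (fun a b : Fin n => 0 < Γ b a) i j) :
    ((Γ.map (Complex.ofReal ·)).charpoly.rootMultiplicity 0 = 1) ∧
    (∀ μ : ℂ, (Γ.map (Complex.ofReal ·)).charpoly.IsRoot μ → μ ≠ 0 → μ.re < 0) := by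
  refine ⟨?_, fun μ hroot hμ => re_neg hn Γ hoff hdiag μ hroot hμ⟩
  set Γc : Matrix (Fin n) (Fin n) ℂ := Γ.map (Complex.ofReal ·) with hΓc
  set Q : Matrix (Fin n) (Fin n) ℂ := Γcᵀ with hQ
  -- kernel of Q is the constants
  have hone : Q.mulVecLin (fun _ => (1:ℂ)) = 0 := by
    funext i
    simp only [Matrix.mulVecLin_apply, Matrix.mulVec, dotProduct, hQ, Matrix.transpose_apply,
      hΓc, Matrix.map_apply, mul_one, Pi.zero_apply]
    have := col_sum_zero Γ hdiag i
    exact_mod_cast congrArg (Complex.ofReal ·) this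
  have hkerQ : LinearMap.ker Q.mulVecLin = Submodule.span ℂ {(fun _ => (1:ℂ) : Fin n → ℂ)} := by
    apply le_antisymm
    · intro v hv
      rw [LinearMap.mem_ker, Matrix.mulVecLin_apply] at hv
      obtain ⟨c, hc⟩ := ker_const hn Γ hoff hdiag hirr v hv
      exact Submodule.mem_span_singleton.mpr ⟨c, by funext j; simp [hc j]⟩
    · rw [Submodule.span_le, Set.singleton_subset_iff]
      exact LinearMap.mem_ker.mpr hone
  have hfinQ : finrank ℂ (LinearMap.ker Q.mulVecLin) = 1 := by
    rw [hkerQ]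
    exact finrank_span_singleton (fun h => one_ne_zero (congrFun h ⟨0, hn⟩))
  -- kernels of powers of Q
  have hkerQpow : ∀ k, 1 ≤ k → LinearMap.ker (Q ^ k).mulVecLin = LinearMap.ker Q.mulVecLin := by
    intro k hk
    ext v
    simp only [LinearMap.mem_ker, Matrix.mulVecLin_apply]
    constructor
    · exact fun h => ker_pow hn Γ hoff hdiag hirr k hk v h
    · intro h
      obtain ⟨m, rfl⟩ := Nat.exists_eq_add_of_le hk
      rw [add_comm, pow_succ, ← Matrix.mulVec_mulVec, h, Matrix.mulVec_zero]
  -- dimension of kernels of powers of Γc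
  have hfin : ∀ k, 1 ≤ k → finrank ℂ (LinearMap.ker (Γc ^ k).mulVecLin) = 1 := by
    intro k hk
    have h1 := rank_nullity (Γc ^ k)
    have h2 := rank_nullity (Q ^ k)
    have h3 : (Q ^ k).rank = (Γc ^ k).rank := by
      rw [hQ, ← Matrix.transpose_pow, Matrix.rank_transpose]
    have h4 : finrank ℂ (LinearMap.ker (Q ^ k).mulVecLin) = 1 := by
      rw [hkerQpow k hk]; exact hfinQ
    omega
  -- endomorphism
  set φ : Module.End ℂ (Fin n → ℂ) := Γc.mulVecLin with hφ
  have hkerφ : ∀ k, 1 ≤ k → LinearMap.ker (φ ^ k) = LinearMap.ker φ := by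
    intro k hk
    have e1 : LinearMap.ker (φ ^ k) = LinearMap.ker (Γc ^ k).mulVecLin := by
      rw [hφ, mulVecLin_pow]
    have e2 : LinearMap.ker φ = LinearMap.ker (Γc ^ 1).mulVecLin := by
      rw [hφ, pow_one]
    have hle : LinearMap.ker φ ≤ LinearMap.ker (φ ^ k) := by
      intro v hv
      rw [LinearMap.mem_ker] at hv ⊢
      obtain ⟨m, rfl⟩ := Nat.exists_eq_add_of_le hk
      rw [add_comm, pow_succ, Module.End.mul_apply, hv, map_zero]
    refine (Submodule.eq_of_le_of_finrank_le hle ?_).symm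
    rw [e1, e2, hfin k hk, hfin 1 le_rfl]
  have hmaxgen : φ.maxGenEigenspace 0 = LinearMap.ker φ := by
    have h0 : φ.maxGenEigenspace 0 = ⨆ k : ℕ, LinearMap.ker (φ ^ k) := by
      simp [← Module.End.iSup_genEigenspace_eq, Module.End.genEigenspace_nat]
    rw [h0]
    apply le_antisymm
    · apply iSup_le
      intro k
      cases k with
      | zero => rw [pow_zero]; intro v hv; rw [LinearMap.mem_ker] at hv; simp_all
      | succ k => rw [hkerφ (k+1) (Nat.succ_le_succ (Nat.zero_le k))]
    · have := le_iSup (fun k : ℕ => LinearMap.ker (φ ^ k)) 1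
      rwa [pow_one] at this
  have hfinmax : finrank ℂ (φ.maxGenEigenspace 0) = 1 := by
    rw [hmaxgen]
    have : LinearMap.ker φ = LinearMap.ker (Γc ^ 1).mulVecLin := by rw [hφ, pow_one]
    rw [this]
    exact hfin 1 le_rfl
  -- charpoly
  have hch : Γc.charpoly = φ.charpoly := by
    rw [← LinearMap.charpoly_toMatrix φ (Pi.basisFun ℂ (Fin n))]
    congr 1
    rw [show φ = Matrix.toLin (Pi.basisFun ℂ (Fin n)) (Pi.basisFun ℂ (Fin n)) Γc by
      rw [Matrix.toLin_eq_toLin']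
      exact (LinearMap.ext fun v => by
        rw [Matrix.toLin'_apply, Matrix.mulVecLin_apply]).symm]
    exact (LinearMap.toMatrix_toLin _ _ _).symm
  rw [Polynomial.rootMultiplicity_eq_natTrailingDegree', hch,
    ← LinearMap.finrank_maxGenEigenspace_zero_eq φ]
  exact hfinmax
end

section
/- Let Γ be a migration matrix of size n, let r_i > 0 and K_i > 0 for i = 1, …, n, and let β > 0. If x ∈ ℝ^n is a positive equilibrium of the n-patch logistic system, then there exists an index i such that x_i ≥ K_i. -/
open Finset

lemma swap_sum {n : ℕ} (f : Fin n → Fin n → ℝ) :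
    ∑ i, ∑ j ∈ univ.erase i, f i j = ∑ i, ∑ j ∈ univ.erase i, f j i := by
  rw [Finset.sum_comm' (h := ?_)]
  intro i j
  simp [eq_comm, and_comm]

/-- If x is a positive equilibrium of the n-patch logistic system with
migration rate β > 0, then there exists an index i such that x_i ≥ K_i. -/
theorem stmt_2 {n : ℕ} (hn : 0 < n) (Γ : Matrix (Fin n) (Fin n) ℝ)
    (hoff : ∀ i j : Fin n, i ≠ j → 0 ≤ Γ i j)
    (hdiag : ∀ i : Fin n, Γ i i = -∑ j ∈ univ.erase i, Γ j i)
    (r K : Fin n → ℝ) (hr : ∀ i, 0 < r i) (hK : ∀ i, 0 < K i)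
    (β : ℝ) (hβ : 0 < β) (x : Fin n → ℝ) (hx : ∀ i, 0 < x i)
    (heq : ∀ i, r i * x i * (1 - x i / K i)
      + β * ∑ j ∈ univ.erase i, (Γ i j * x j - Γ j i * x i) = 0) :
    ∃ i, K i ≤ x i := by
  by_contra h
  push_neg at h
  have hS : ∑ i, ∑ j ∈ univ.erase i, (Γ i j * x j - Γ j i * x i) = 0 := by
    have hsw := swap_sum (fun i j => Γ i j * x j)
    simp only [Finset.sum_sub_distrib]
    rw [hsw]
    ring
  have hsum : ∑ i, (r i * x i * (1 - x i / K i)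
      + β * ∑ j ∈ univ.erase i, (Γ i j * x j - Γ j i * x i)) = 0 := by
    exact Finset.sum_eq_zero fun i _ => heq i
  rw [Finset.sum_add_distrib, ← Finset.mul_sum, hS, mul_zero, add_zero] at hsum
  have hpos : 0 < ∑ i, r i * x i * (1 - x i / K i) := by
    apply Finset.sum_pos
    · intro i _
      have h1 : 0 < 1 - x i / K i := by
        have := (div_lt_one (hK i)).mpr (h i)
        linarith
      have := hr i
      have := hx i
      positivity
    · exact univ_nonempty_iff.mpr (Fin.pos_iff_nonempty.mp hn)
  linarith
end

section
/- Let Γ be an irreducible migration matrix of size n, let δ = (δ_1, …, δ_n) be a positive vector generating ker Γ, let r_i > 0, K_i > 0 and α_i = r_i/K_i for i = 1, …, n. Suppose that for each β > 0, x(β) ∈ ℝ^n is a positive equilibrium of the n-patch logistic system with migration rate β. Then, as β → +∞, x(β) converges to the point ((Σ_{i=1}^n δ_i r_i)/(Σ_{i=1}^n δ_i² α_i)) · (δ_1, …, δ_n). -/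
/-!
Summing the equilibrium equations over all patches cancels the migration terms, so the
logistic growth terms of `x(β)` sum to zero. This bounds `x(β)` uniformly (look at its
largest coordinate) and forces `x(β) i ≥ K i` in some patch. The equation then gives
`Γ x(β) = O(1/β)`, so every cluster point `p` of `x(β)` lies in `ker Γ`, i.e. `p = c • δ`,
still has vanishing total growth and some coordinate `p i ≥ K i`. The total growth of `c • δ`
is `c (Σ δ_i r_i - c Σ δ_i² α_i)` and `c ≠ 0`, which pins down `c`; by compactness,
`x(β)` converges.
-/

open Finset Filter Topology Matrix

theorem MapClusterPt.eq_of_tendsto {α X : Type*} [TopologicalSpace X] [T2Space X] {F : Filter α}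
    {u : α → X} {x y : X} (hx : MapClusterPt x F u) (hy : Tendsto u F (𝓝 y)) : x = y :=
  eq_of_nhds_neBot (ClusterPt.mono hx hy)

theorem tendsto_nhds_zero_of_add_smul_eq_zero {E : Type*} [NormedAddCommGroup E] [NormedSpace ℝ E]
    {u v : ℝ → E} (hv : IsBoundedUnder (· ≤ ·) atTop (norm ∘ v))
    (h : ∀ᶠ β in atTop, v β + β • u β = 0) : Tendsto u atTop (𝓝 0) := by
  have hu : ∀ᶠ β in atTop, β⁻¹ • -v β = u β := by
    filter_upwards [h, eventually_gt_atTop 0] with β hβ hpos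
    rw [← eq_neg_of_add_eq_zero_right hβ, inv_smul_smul₀ hpos.ne']
  refine (tendsto_inv_atTop_zero.zero_smul_isBoundedUnder_le ?_).congr' hu
  simpa [Function.comp_def] using hv

section Logistic

variable {ι : Type*} (r K : ι → ℝ)

noncomputable def logisticGrowth (x : ι → ℝ) : ι → ℝ :=
  fun i => r i * x i * (1 - x i / K i)

theorem continuous_logisticGrowth : Continuous (logisticGrowth r K) :=
  continuous_pi fun i => by unfold logisticGrowth; fun_prop

theorem sum_logisticGrowth_smul [Fintype ι] (c : ℝ) (v : ι → ℝ) :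
    ∑ i, logisticGrowth r K (c • v) i =
      c * (∑ i, v i * r i - c * ∑ i, v i ^ 2 * (r i / K i)) := by
  simp only [logisticGrowth, Pi.smul_apply, smul_eq_mul, mul_sum, ← sum_sub_distrib]
  exact sum_congr rfl fun i _ => by ring

variable {r K}

theorem exists_le_of_sum_logisticGrowth_eq_zero [Fintype ι] [Nonempty ι] (hr : ∀ i, 0 < r i)
    (hK : ∀ i, 0 < K i) {x : ι → ℝ} (hx : ∀ i, 0 < x i)
    (h : ∑ i, logisticGrowth r K x i = 0) : ∃ i, K i ≤ x i := by
  by_contra! hlt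
  refine h.not_gt (sum_pos (fun i _ => ?_) univ_nonempty)
  have := hr i; have := hx i
  have : 0 < 1 - x i / K i := sub_pos.2 ((div_lt_one (hK i)).2 (hlt i))
  unfold logisticGrowth; positivity

theorem le_of_sum_logisticGrowth_eq_zero [Fintype ι] (hr : ∀ i, 0 < r i) (hK : ∀ i, 0 < K i)
    {x : ι → ℝ} (hx : ∀ i, 0 ≤ x i) (h : ∑ i, logisticGrowth r K x i = 0) (i : ι) :
    x i ≤ (∑ j, r j) * ∑ j, K j / r j := by
  have : Nonempty ι := ⟨i⟩
  obtain ⟨k, hk⟩ := Finite.exists_max x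
  have hquad : ∑ j, r j / K j * x j ^ 2 = ∑ j, r j * x j := by
    rw [← sub_eq_zero, ← sum_sub_distrib, ← neg_eq_zero, ← sum_neg_distrib, ← h]
    exact sum_congr rfl fun j _ => by unfold logisticGrowth; ring
  have hmax : r k / K k * x k ^ 2 ≤ (∑ j, r j) * x k := calc
    _ ≤ ∑ j, r j / K j * x j ^ 2 :=
      single_le_sum (f := fun j => r j / K j * x j ^ 2)
        (fun j _ => by have := hr j; have := hK j; positivity) (mem_univ k)
    _ = ∑ j, r j * x j := hquad
    _ ≤ ∑ j, r j * x k := sum_le_sum fun j _ => mul_le_mul_of_nonneg_left (hk j) (hr j).le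
    _ = (∑ j, r j) * x k := (sum_mul ..).symm
  have hS : 0 ≤ ∑ j, r j := sum_nonneg fun j _ => (hr j).le
  have hxk : x k ≤ (∑ j, r j) * (K k / r k) := by
    have := hr k; have := hK k
    rcases (hx k).eq_or_lt with h0 | hpos
    · rw [← h0]; positivity
    have : r k / K k * x k ≤ ∑ j, r j := le_of_mul_le_mul_right (by nlinarith) hpos
    calc x k = r k / K k * x k * (K k / r k) := by field_simp
      _ ≤ (∑ j, r j) * (K k / r k) := by gcongr
  calc x i ≤ x k := hk i
    _ ≤ (∑ j, r j) * (K k / r k) := hxk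
    _ ≤ (∑ j, r j) * ∑ j, K j / r j := by
      gcongr
      exact single_le_sum (f := fun j => K j / r j)
          (fun j _ => by have := hr j; have := hK j; positivity) (mem_univ k)

theorem isClosed_setOf_sum_logisticGrowth_eq_zero_and_exists_le [Fintype ι] :
    IsClosed {y : ι → ℝ | ∑ i, logisticGrowth r K y i = 0 ∧ ∃ i, K i ≤ y i} := by
  rw [Set.ofPred_and, Set.ofPred_exists]
  exact (isClosed_eq (continuous_finsetSum _ fun i _ =>
      (continuous_apply i).comp (continuous_logisticGrowth r K)) continuous_const).inter
    (isClosed_iUnion_of_finite fun i => isClosed_le continuous_const (continuous_apply i))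

theorem eq_div_of_sum_logisticGrowth_smul_eq_zero [Fintype ι] {δ : ι → ℝ} {c : ℝ}
    (hr : ∀ i, 0 < r i) (hK : ∀ i, 0 < K i)
    (h : ∑ i, logisticGrowth r K (c • δ) i = 0) (hle : ∃ i, K i ≤ c * δ i) :
    c = (∑ i, δ i * r i) / ∑ i, δ i ^ 2 * (r i / K i) := by
  obtain ⟨i, hi⟩ := hle
  have hci : c * δ i ≠ 0 := (lt_of_lt_of_le (hK i) hi).ne'
  have hB : 0 < ∑ i, δ i ^ 2 * (r i / K i) := by
    refine sum_pos' (fun j _ => ?_) ⟨i, mem_univ i, ?_⟩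
    · have := hr j; have := hK j; positivity
    · have := hr i; have := hK i; have := right_ne_zero_of_mul hci; positivity
  rw [sum_logisticGrowth_smul, mul_eq_zero, sub_eq_zero] at h
  rw [eq_div_iff hB.ne', ← h.resolve_left (left_ne_zero_of_mul hci)]

end Logistic

section Migration

variable {ι : Type*} [Fintype ι] [DecidableEq ι] (Γ : Matrix ι ι ℝ) (y : ι → ℝ)

theorem sum_sum_erase_sub_eq_zero :
    ∑ i, ∑ j ∈ univ.erase i, (Γ i j * y j - Γ j i * y i) = 0 := by
  simp only [fun i => sum_erase (univ : Finset ι) (f := fun j => Γ i j * y j - Γ j i * y i)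
    (sub_self _), sum_sub_distrib]
  rw [sum_comm, sub_self]

theorem mulVec_apply_eq_sum_erase (hdiag : ∀ i, Γ i i = -∑ j ∈ univ.erase i, Γ j i)
    (i : ι) : (Γ *ᵥ y) i = ∑ j ∈ univ.erase i, (Γ i j * y j - Γ j i * y i) := by
  rw [mulVec, dotProduct, ← add_sum_erase _ _ (mem_univ i), hdiag, sum_sub_distrib, ← sum_mul]
  ring

end Migration

theorem stmt_4_general {n : ℕ} (hn : 0 < n) (Γ : Matrix (Fin n) (Fin n) ℝ)
    (hdiag : ∀ i : Fin n, Γ i i = -∑ j ∈ univ.erase i, Γ j i)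
    (δ r K : Fin n → ℝ)
    (hgen : ∀ y : Fin n → ℝ, Γ.mulVec y = 0 → ∃ c : ℝ, y = c • δ)
    (hr : ∀ i, 0 < r i) (hK : ∀ i, 0 < K i)
    (x : ℝ → Fin n → ℝ)
    (hx : ∀ β : ℝ, 0 < β → (∀ i, 0 < x β i) ∧
      ∀ i, r i * x β i * (1 - x β i / K i)
        + β * ∑ j ∈ univ.erase i, (Γ i j * x β j - Γ j i * x β i) = 0) :
    Filter.Tendsto x Filter.atTop
      (nhds (((∑ i, δ i * r i) / (∑ i, δ i ^ 2 * (r i / K i))) • δ)) := by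
  have : Nonempty (Fin n) := Fin.pos_iff_nonempty.mp hn
  have hsum (β : ℝ) (hβ : 0 < β) : ∑ i, logisticGrowth r K (x β) i = 0 := by
    have := sum_eq_zero (s := univ) fun i _ => (hx β hβ).2 i
    rwa [sum_add_distrib, ← mul_sum, sum_sum_erase_sub_eq_zero, mul_zero, add_zero] at this
  have hmem : ∀ᶠ β in atTop, x β ∈ Set.Icc 0 fun _ => (∑ j, r j) * ∑ j, K j / r j := by
    filter_upwards [eventually_gt_atTop 0] with β hβ
    have hx0 i : 0 ≤ x β i := ((hx β hβ).1 i).le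
    exact ⟨hx0, le_of_sum_logisticGrowth_eq_zero hr hK hx0 (hsum β hβ)⟩
  have hΓ : Tendsto (fun β => Γ *ᵥ x β) atTop (𝓝 0) := by
    obtain ⟨C, hC⟩ :=
      isCompact_Icc.exists_bound_of_continuousOn (continuous_logisticGrowth r K).continuousOn
    refine tendsto_nhds_zero_of_add_smul_eq_zero (v := fun β => logisticGrowth r K (x β))
      (isBoundedUnder_of_eventually_le (hmem.mono fun β hβ => hC _ hβ)) ?_
    filter_upwards [eventually_gt_atTop 0] with β hβ
    funext i
    simpa [logisticGrowth, mulVec_apply_eq_sum_erase Γ _ hdiag] using (hx β hβ).2 i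
  refine isCompact_Icc.tendsto_nhds_of_unique_mapClusterPt hmem fun p _ hp => ?_
  obtain ⟨c, rfl⟩ := hgen p <|
    (hp.tendsto_comp ((continuous_const.matrix_mulVec continuous_id).tendsto p)).eq_of_tendsto hΓ
  have hgrowth :
      ∀ᶠ β in atTop, ∑ i, logisticGrowth r K (x β) i = 0 ∧ ∃ i, K i ≤ x β i := by
    filter_upwards [eventually_gt_atTop 0] with β hβ
    exact ⟨hsum β hβ,
      exists_le_of_sum_logisticGrowth_eq_zero hr hK (hx β hβ).1 (hsum β hβ)⟩
  obtain ⟨h0, hle⟩ :=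
    isClosed_setOf_sum_logisticGrowth_eq_zero_and_exists_le.mem_of_mapClusterPt hp hgrowth
  rw [eq_div_of_sum_logisticGrowth_smul_eq_zero hr hK h0 hle]

/-- If for each β > 0, x(β) is a positive equilibrium of the n-patch
logistic system, then as β → +∞, x(β) converges to
((Σ δ_i r_i)/(Σ δ_i² α_i)) · δ, where α_i = r_i/K_i. -/
theorem stmt_4 {n : ℕ} (hn : 0 < n) (Γ : Matrix (Fin n) (Fin n) ℝ)
    (hoff : ∀ i j : Fin n, i ≠ j → 0 ≤ Γ i j)
    (hdiag : ∀ i : Fin n, Γ i i = -∑ j ∈ univ.erase i, Γ j i)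
    (hirr : ∀ i j : Fin n, i ≠ j → Relation.TransGen (fun a b : Fin n => 0 < Γ b a) i j)
    (δ r K : Fin n → ℝ) (hδ : ∀ i, 0 < δ i) (hδker : Γ.mulVec δ = 0)
    (hgen : ∀ y : Fin n → ℝ, Γ.mulVec y = 0 → ∃ c : ℝ, y = c • δ)
    (hr : ∀ i, 0 < r i) (hK : ∀ i, 0 < K i)
    (x : ℝ → Fin n → ℝ)
    (hx : ∀ β : ℝ, 0 < β → (∀ i, 0 < x β i) ∧
      ∀ i, r i * x β i * (1 - x β i / K i)
        + β * ∑ j ∈ univ.erase i, (Γ i j * x β j - Γ j i * x β i) = 0) :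
    Filter.Tendsto x Filter.atTop
      (nhds (((∑ i, δ i * r i) / (∑ i, δ i ^ 2 * (r i / K i))) • δ)) :=
  stmt_4_general hn Γ hdiag δ r K hgen hr hK x hx
end

section
/- Let Γ be an irreducible migration matrix of size n, let δ = (δ_1, …, δ_n) be a positive vector generating ker Γ, let r_i > 0, K_i > 0 and α_i = r_i/K_i for i = 1, …, n. Suppose that for each β > 0, x(β) ∈ ℝ^n is a positive equilibrium of the n-patch logistic system with migration rate β. Then the total equilibrium population Σ_{i=1}^n x_i(β) converges, as β → +∞, to X_T*(+∞) = (Σ_{i=1}^n δ_i) · (Σ_{i=1}^n δ_i r_i)/(Σ_{i=1}^n δ_i² α_i). Moreover, if the vector K = (K_1, …, K_n) satisfies K = λδ for some λ > 0 (that is, K ∈ ker Γ), then X_T*(+∞) = Σ_{i=1}^n K_i. -/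
open Finset Filter

set_option maxHeartbeats 1000000 in
/-- The total equilibrium population Σ x_i(β) converges, as β → +∞, to
X_T*(+∞) = (Σ δ_i) (Σ δ_i r_i)/(Σ δ_i² α_i). Moreover, if K = λδ for some λ > 0,
then X_T*(+∞) = Σ K_i. -/
theorem stmt_5 {n : ℕ} (hn : 0 < n) (Γ : Matrix (Fin n) (Fin n) ℝ)
    (hoff : ∀ i j : Fin n, i ≠ j → 0 ≤ Γ i j)
    (hdiag : ∀ i : Fin n, Γ i i = -∑ j ∈ univ.erase i, Γ j i)
    (hirr : ∀ i j : Fin n, i ≠ j → Relation.TransGen (fun a b : Fin n => 0 < Γ b a) i j)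
    (δ r K : Fin n → ℝ) (hδ : ∀ i, 0 < δ i) (hδker : Γ.mulVec δ = 0)
    (hgen : ∀ y : Fin n → ℝ, Γ.mulVec y = 0 → ∃ c : ℝ, y = c • δ)
    (hr : ∀ i, 0 < r i) (hK : ∀ i, 0 < K i)
    (x : ℝ → Fin n → ℝ)
    (hx : ∀ β : ℝ, 0 < β → (∀ i, 0 < x β i) ∧
      ∀ i, r i * x β i * (1 - x β i / K i)
        + β * ∑ j ∈ univ.erase i, (Γ i j * x β j - Γ j i * x β i) = 0) :
    Filter.Tendsto (fun β => ∑ i, x β i) Filter.atTop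
      (nhds ((∑ i, δ i) * ((∑ i, δ i * r i) / (∑ i, δ i ^ 2 * (r i / K i)))))
    ∧ (∀ lam : ℝ, 0 < lam → K = lam • δ →
        (∑ i, δ i) * ((∑ i, δ i * r i) / (∑ i, δ i ^ 2 * (r i / K i))) = ∑ i, K i) := by
  have hne : (univ : Finset (Fin n)).Nonempty :=
    univ_nonempty_iff.mpr (Fin.pos_iff_nonempty.mp hn)
  set α : Fin n → ℝ := fun i => r i / K i with hα
  have hαpos : ∀ i, 0 < α i := fun i => div_pos (hr i) (hK i)
  -- key rewriting of the migration term
  have hkey : ∀ (y : Fin n → ℝ) (i : Fin n),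
      ∑ j ∈ univ.erase i, (Γ i j * y j - Γ j i * y i) = Γ.mulVec y i := by
    intro y i
    have e1 : ∑ j ∈ univ.erase i, Γ i j * y j = (∑ j, Γ i j * y j) - Γ i i * y i := by
      rw [← Finset.add_sum_erase univ (fun j => Γ i j * y j) (mem_univ i)]; ring
    have e2 : ∑ j ∈ univ.erase i, Γ j i = -Γ i i := by rw [hdiag i]; ring
    simp only [Matrix.mulVec, dotProduct]
    rw [Finset.sum_sub_distrib, e1, ← Finset.sum_mul, e2]; ring
  have heq : ∀ β : ℝ, 0 < β → ∀ i,
      r i * x β i * (1 - x β i / K i) + β * Γ.mulVec (x β) i = 0 := by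
    intro β hβ i
    have := (hx β hβ).2 i
    rwa [hkey (x β) i] at this
  have hf : ∀ β : ℝ, ∀ i, r i * x β i * (1 - x β i / K i)
      = r i * x β i - α i * (x β i) ^ 2 := by
    intro β i
    have hKne := (hK i).ne'
    simp only [hα]
    field_simp
  -- column sums vanish
  have hcolsum : ∀ j, ∑ i, Γ i j = 0 := by
    intro j
    have h := Finset.add_sum_erase univ (fun i => Γ i j) (mem_univ j)
    rw [hdiag j] at h
    linarith
  have hmv0 : ∀ y : Fin n → ℝ, ∑ i, Γ.mulVec y i = 0 := by
    intro y
    simp only [Matrix.mulVec, dotProduct]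
    rw [Finset.sum_comm]
    apply Finset.sum_eq_zero
    intro j _
    rw [← Finset.sum_mul, hcolsum j, zero_mul]
  -- balance law
  have hbal : ∀ β : ℝ, 0 < β → ∑ i, (r i * x β i - α i * (x β i) ^ 2) = 0 := by
    intro β hβ
    have h0 : ∑ i, (r i * x β i * (1 - x β i / K i) + β * Γ.mulVec (x β) i) = 0 :=
      Finset.sum_eq_zero fun i _ => heq β hβ i
    rw [Finset.sum_add_distrib, ← Finset.mul_sum, hmv0 (x β), mul_zero, add_zero] at h0
    rw [← h0]
    exact Finset.sum_congr rfl fun i _ => by rw [hf β i]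
  -- constants
  set R : ℝ := univ.sup' hne r with hR
  set ρ : ℝ := univ.inf' hne r with hρ
  set A : ℝ := univ.inf' hne α with hA
  set B : ℝ := univ.sup' hne α with hB
  have hρpos : 0 < ρ := (Finset.lt_inf'_iff hne).mpr fun i _ => hr i
  have hApos : 0 < A := (Finset.lt_inf'_iff hne).mpr fun i _ => hαpos i
  have hRpos : 0 < R := lt_of_lt_of_le (hr ⟨0, hn⟩) (Finset.le_sup' r (mem_univ _))
  have hBpos : 0 < B := lt_of_lt_of_le (hαpos ⟨0, hn⟩) (Finset.le_sup' α (mem_univ _))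
  set m : ℝ := ρ / B with hm
  set M : ℝ := (n : ℝ) * R / A with hMdef
  have hmpos : 0 < m := div_pos hρpos hBpos
  have hMpos : 0 < M := div_pos (mul_pos (by exact_mod_cast hn) hRpos) hApos
  -- uniform bounds
  have hb : ∀ β : ℝ, 0 < β →
      (m ≤ ∑ i, x β i) ∧ (∀ i, 0 ≤ x β i ∧ x β i ≤ M) := by
    intro β hβ
    obtain ⟨hpos, _⟩ := hx β hβ
    have hS0 : 0 < ∑ i, x β i := Finset.sum_pos (fun i _ => hpos i) hne
    have hyS : ∀ i, x β i ≤ ∑ j, x β j := fun i =>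
      Finset.single_le_sum (fun j _ => (hpos j).le) (mem_univ i)
    have hbalβ : ∑ i, r i * x β i = ∑ i, α i * (x β i) ^ 2 := by
      have := hbal β hβ
      rw [Finset.sum_sub_distrib] at this
      linarith
    have hsq : ∑ i, (x β i) ^ 2 ≤ (∑ i, x β i) ^ 2 := by
      calc ∑ i, (x β i) ^ 2 ≤ ∑ i, x β i * (∑ j, x β j) :=
            Finset.sum_le_sum fun i _ => by nlinarith [hpos i, hyS i]
        _ = (∑ i, x β i) ^ 2 := by rw [← Finset.sum_mul]; ring
    have hlow : ρ * (∑ i, x β i) ≤ B * (∑ i, x β i) ^ 2 := by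
      calc ρ * (∑ i, x β i) = ∑ i, ρ * x β i := by rw [Finset.mul_sum]
        _ ≤ ∑ i, r i * x β i := Finset.sum_le_sum fun i _ =>
            mul_le_mul_of_nonneg_right (Finset.inf'_le r (mem_univ i)) (hpos i).le
        _ = ∑ i, α i * (x β i) ^ 2 := hbalβ
        _ ≤ ∑ i, B * (x β i) ^ 2 := Finset.sum_le_sum fun i _ =>
            mul_le_mul_of_nonneg_right (Finset.le_sup' α (mem_univ i)) (sq_nonneg _)
        _ = B * ∑ i, (x β i) ^ 2 := by rw [Finset.mul_sum]
        _ ≤ B * (∑ i, x β i) ^ 2 := by nlinarith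
    have hmS : m ≤ ∑ i, x β i := by
      rw [hm, div_le_iff₀ hBpos]
      have : ρ * (∑ i, x β i) ≤ (∑ i, x β i * B) * (∑ i, x β i) := by
        rw [← Finset.sum_mul]; nlinarith
      nlinarith
    have hCS : (∑ i, x β i) ^ 2 ≤ (n : ℝ) * ∑ i, (x β i) ^ 2 := by
      have := Finset.sum_mul_sq_le_sq_mul_sq univ (fun _ => (1 : ℝ)) (x β)
      simpa using this
    have hup2 : A * (∑ i, (x β i) ^ 2) ≤ R * ∑ i, x β i := by
      calc A * (∑ i, (x β i) ^ 2) = ∑ i, A * (x β i) ^ 2 := by rw [Finset.mul_sum]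
        _ ≤ ∑ i, α i * (x β i) ^ 2 := Finset.sum_le_sum fun i _ =>
            mul_le_mul_of_nonneg_right (Finset.inf'_le α (mem_univ i)) (sq_nonneg _)
        _ = ∑ i, r i * x β i := hbalβ.symm
        _ ≤ ∑ i, R * x β i := Finset.sum_le_sum fun i _ =>
            mul_le_mul_of_nonneg_right (Finset.le_sup' r (mem_univ i)) (hpos i).le
        _ = R * ∑ i, x β i := by rw [Finset.mul_sum]
    have hSM : ∑ i, x β i ≤ M := by
      rw [hMdef, le_div_iff₀ hApos]
      have h1 : A * (∑ i, x β i) ^ 2 ≤ (n : ℝ) * (R * ∑ i, x β i) := by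
        calc A * (∑ i, x β i) ^ 2 ≤ A * ((n : ℝ) * ∑ i, (x β i) ^ 2) := by nlinarith
          _ = (n : ℝ) * (A * ∑ i, (x β i) ^ 2) := by ring
          _ ≤ (n : ℝ) * (R * ∑ i, x β i) := by
              have hn0 : (0 : ℝ) ≤ n := Nat.cast_nonneg n
              nlinarith
      nlinarith
    exact ⟨hmS, fun i => ⟨(hpos i).le, le_trans (hyS i) hSM⟩⟩
  -- migration term tends to zero
  have hΓ0 : Tendsto (fun β => Γ.mulVec (x β)) atTop (nhds 0) := by
    rw [tendsto_pi_nhds]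
    intro i
    simp only [Pi.zero_apply]
    have hC : Tendsto (fun β : ℝ => (R * M + B * M ^ 2) * β⁻¹) atTop (nhds 0) := by
      have h := (tendsto_inv_atTop_zero : Tendsto (fun β : ℝ => β⁻¹) atTop (nhds 0))
      simpa using h.const_mul (R * M + B * M ^ 2)
    apply squeeze_zero_norm' _ hC
    filter_upwards [eventually_gt_atTop (0 : ℝ)] with β hβ
    obtain ⟨hmS, hcomp⟩ := hb β hβ
    have hv : Γ.mulVec (x β) i = (α i * (x β i) ^ 2 - r i * x β i) / β := by
      rw [eq_div_iff hβ.ne']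
      have h1 := heq β hβ i
      rw [hf β i] at h1
      linarith [h1]
    have e1 : α i * (x β i) ^ 2 ≤ B * M ^ 2 := by
      have h1 : α i ≤ B := Finset.le_sup' α (mem_univ i)
      have h2 : (x β i) ^ 2 ≤ M ^ 2 := pow_le_pow_left₀ (hcomp i).1 (hcomp i).2 2
      exact mul_le_mul h1 h2 (sq_nonneg _) hBpos.le
    have e2 : r i * x β i ≤ R * M := by
      have h1 : r i ≤ R := Finset.le_sup' r (mem_univ i)
      exact mul_le_mul h1 (hcomp i).2 (hcomp i).1 hRpos.le
    have e3 : 0 ≤ α i * (x β i) ^ 2 := mul_nonneg (hαpos i).le (sq_nonneg _)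
    have e4 : 0 ≤ r i * x β i := mul_nonneg (hr i).le (hcomp i).1
    rw [hv, Real.norm_eq_abs, abs_div, abs_of_pos hβ, div_eq_mul_inv]
    exact mul_le_mul_of_nonneg_right (abs_le.mpr ⟨by linarith, by linarith⟩)
      (inv_nonneg.mpr hβ.le)
  -- positivity of the limit data
  have hSδ : 0 < ∑ i, δ i := Finset.sum_pos (fun i _ => hδ i) hne
  have hNum : 0 < ∑ i, δ i * r i :=
    Finset.sum_pos (fun i _ => mul_pos (hδ i) (hr i)) hne
  have hDen : 0 < ∑ i, δ i ^ 2 * (r i / K i) :=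
    Finset.sum_pos (fun i _ => mul_pos (pow_pos (hδ i) 2) (hαpos i)) hne
  constructor
  · -- main convergence
    apply tendsto_of_subseq_tendsto
    intro ns hns
    obtain ⟨N, hN⟩ := Filter.eventually_atTop.mp (hns.eventually (eventually_ge_atTop (1 : ℝ)))
    have hposβ : ∀ k : ℕ, (0 : ℝ) < ns (k + N) := fun k =>
      lt_of_lt_of_le zero_lt_one (hN (k + N) (Nat.le_add_left N k))
    set z : ℕ → Fin n → ℝ := fun k => x (ns (k + N)) with hz
    have hzmem : ∀ k, z k ∈ Set.Icc (0 : Fin n → ℝ) (fun _ => M) := by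
      intro k
      have hbk := (hb _ (hposβ k)).2
      constructor
      · intro i; exact (hbk i).1
      · intro i; exact (hbk i).2
    obtain ⟨a, ha, φ, hφ, hza⟩ := (isCompact_Icc :
      IsCompact (Set.Icc (0 : Fin n → ℝ) (fun _ => M))).tendsto_subseq hzmem
    have hβ' : Tendsto (fun k => ns (φ k + N)) atTop atTop :=
      hns.comp ((tendsto_add_atTop_nat N).comp hφ.tendsto_atTop)
    -- the limit point is in the kernel
    have h1 : Tendsto (fun k => Γ.mulVec (z (φ k))) atTop (nhds (Γ.mulVec a)) := by
      rw [tendsto_pi_nhds]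
      intro i
      simp only [Matrix.mulVec, dotProduct]
      exact tendsto_finset_sum _ fun j _ => ((tendsto_pi_nhds.mp hza j).const_mul (Γ i j))
    have h2 : Tendsto (fun k => Γ.mulVec (z (φ k))) atTop (nhds 0) := hΓ0.comp hβ'
    have hΓa : Γ.mulVec a = 0 := tendsto_nhds_unique h1 h2
    obtain ⟨c, hc⟩ := hgen a hΓa
    -- sum convergence
    have hSz : Tendsto (fun k => ∑ i, z (φ k) i) atTop (nhds (∑ i, a i)) :=
      tendsto_finset_sum _ fun i _ => (tendsto_pi_nhds.mp hza i)
    have hma : m ≤ ∑ i, a i :=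
      ge_of_tendsto' hSz fun k => (hb _ (hposβ (φ k))).1
    -- balance in the limit
    have hcontg : Continuous (fun v : Fin n → ℝ => ∑ i, (r i * v i - α i * v i ^ 2)) := by
      apply continuous_finset_sum
      intro i _
      exact ((continuous_const.mul (continuous_apply i)).sub
        (continuous_const.mul ((continuous_apply i).pow 2)))
    have hga : Tendsto (fun k => ∑ i, (r i * z (φ k) i - α i * (z (φ k) i) ^ 2)) atTop
        (nhds (∑ i, (r i * a i - α i * a i ^ 2))) := (hcontg.tendsto a).comp hza
    have hgz : (fun k => ∑ i, (r i * z (φ k) i - α i * (z (φ k) i) ^ 2)) = fun _ => (0 : ℝ) :=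
      funext fun k => hbal _ (hposβ (φ k))
    rw [hgz] at hga
    have hbal_a : ∑ i, (r i * a i - α i * a i ^ 2) = 0 :=
      tendsto_nhds_unique hga tendsto_const_nhds
    -- identify c
    have hai : ∀ i, a i = c * δ i := fun i => by rw [hc]; rfl
    have hsuma : ∑ i, a i = c * ∑ i, δ i := by
      rw [Finset.mul_sum]; exact Finset.sum_congr rfl fun i _ => hai i
    have hcpos : 0 < c := by
      by_contra hcle
      push_neg at hcle
      have : ∑ i, a i ≤ 0 := by
        rw [hsuma]
        exact mul_nonpos_of_nonpos_of_nonneg hcle hSδ.le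
      linarith
    have hbal_c : c * (∑ i, δ i * r i) - c ^ 2 * (∑ i, δ i ^ 2 * (r i / K i)) = 0 := by
      rw [Finset.mul_sum, Finset.mul_sum, ← Finset.sum_sub_distrib, ← hbal_a]
      refine Finset.sum_congr rfl fun i _ => ?_
      rw [hai i]
      simp only [hα]
      ring
    have hceq : c = ((∑ i, δ i * r i) / (∑ i, δ i ^ 2 * (r i / K i))) := by
      rw [eq_div_iff hDen.ne']
      have : c * ((∑ i, δ i * r i) - c * (∑ i, δ i ^ 2 * (r i / K i))) = 0 := by linear_combination hbal_c
      rcases mul_eq_zero.mp this with h | h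
      · exact absurd h hcpos.ne'
      · linarith
    refine ⟨fun k => φ k + N, ?_⟩
    have hfinal : ∑ i, a i = (∑ i, δ i) * ((∑ i, δ i * r i) / (∑ i, δ i ^ 2 * (r i / K i))) := by
      rw [hsuma, hceq]; ring
    rw [hfinal] at hSz
    exact hSz
  · -- second part
    intro lam hlam hKlam
    have hKi : ∀ i, K i = lam * δ i := fun i => by rw [hKlam]; rfl
    have h2 : ∑ i, δ i ^ 2 * (r i / K i) = (∑ i, δ i * r i) / lam := by
      rw [Finset.sum_div]
      refine Finset.sum_congr rfl fun i _ => ?_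
      rw [hKi i]
      have := (hδ i).ne'
      field_simp
    have h3 : ∑ i, K i = lam * ∑ i, δ i := by
      rw [Finset.mul_sum]; exact Finset.sum_congr rfl fun i _ => hKi i
    rw [h2, h3]
    have hq : (∑ i, δ i * r i) / ((∑ i, δ i * r i) / lam) = lam := by
      rw [div_div_eq_mul_div, mul_comm, mul_div_assoc, div_self hNum.ne', mul_one]
    rw [hq]
    ring
end

section
/- Let Γ be an irreducible migration matrix of size n, let δ = (δ_1, …, δ_n) be a positive vector generating ker Γ, let r_i > 0, K_i > 0 and α_i = r_i/K_i for i = 1, …, n. If the vector (1/α_1, …, 1/α_n) lies in ker Γ, then the perfect-mixing total population X_T*(+∞) = (Σ_{i=1}^n δ_i) · (Σ_{i=1}^n δ_i r_i)/(Σ_{i=1}^n δ_i² α_i) equals Σ_{i=1}^n K_i. -/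
open Finset

/-- If the vector (1/α_1, …, 1/α_n) (with α_i = r_i/K_i) lies in ker Γ,
then the perfect-mixing total population
X_T*(+∞) = (Σ δ_i)(Σ δ_i r_i)/(Σ δ_i² α_i) equals Σ K_i. -/
theorem stmt_6 {n : ℕ} (hn : 0 < n) (Γ : Matrix (Fin n) (Fin n) ℝ)
    (hoff : ∀ i j : Fin n, i ≠ j → 0 ≤ Γ i j)
    (hdiag : ∀ i : Fin n, Γ i i = -∑ j ∈ univ.erase i, Γ j i)
    (hirr : ∀ i j : Fin n, i ≠ j → Relation.TransGen (fun a b : Fin n => 0 < Γ b a) i j)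
    (δ r K : Fin n → ℝ) (hδ : ∀ i, 0 < δ i) (hδker : Γ.mulVec δ = 0)
    (hgen : ∀ y : Fin n → ℝ, Γ.mulVec y = 0 → ∃ c : ℝ, y = c • δ)
    (hr : ∀ i, 0 < r i) (hK : ∀ i, 0 < K i)
    (hαker : Γ.mulVec (fun i => 1 / (r i / K i)) = 0) :
    (∑ i, δ i) * ((∑ i, δ i * r i) / (∑ i, δ i ^ 2 * (r i / K i))) = ∑ i, K i := by
  obtain ⟨c, hc⟩ := hgen _ hαker
  have hci : ∀ i, K i / r i = c * δ i := by
    intro i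
    have := congrFun hc i
    simpa [one_div_div] using this
  have i0 : Fin n := ⟨0, hn⟩
  have hcpos : 0 < c := by
    have h := hci i0
    have h2 : 0 < c * δ i0 := h ▸ div_pos (hK i0) (hr i0)
    nlinarith [hδ i0]
  have hKi : ∀ i, K i = c * δ i * r i := by
    intro i
    have := hci i
    rw [div_eq_iff (hr i).ne'] at this
    linarith
  have h1 : ∑ i, δ i * r i = (∑ i, K i) / c := by
    rw [eq_div_iff hcpos.ne', Finset.sum_mul]
    exact Finset.sum_congr rfl fun i _ => by rw [hKi i]; ring
  have h2 : ∑ i, δ i ^ 2 * (r i / K i) = (∑ i, δ i) / c := by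
    rw [eq_div_iff hcpos.ne', Finset.sum_mul]
    refine Finset.sum_congr rfl fun i _ => ?_
    rw [hKi i]
    have h1 := (hδ i).ne'
    have h2 := (hr i).ne'
    field_simp
  rw [h1, h2]
  have hδs : 0 < ∑ i, δ i := Finset.sum_pos (fun i _ => hδ i) ⟨i0, mem_univ i0⟩
  field_simp
end

section
/- Let Γ be a migration matrix of size n, let K_i > 0 for i = 1, …, n, and suppose the growth rates are all equal: r_1 = r_2 = … = r_n = r > 0. Then for every β ≥ 0, any positive equilibrium x of the n-patch logistic system satisfies Σ_{i=1}^n x_i ≤ Σ_{i=1}^n K_i. -/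
open Finset

/-- If all growth rates are equal to r > 0, then for every β ≥ 0 any
positive equilibrium x of the n-patch logistic system satisfies Σ x_i ≤ Σ K_i. -/
theorem stmt_9 {n : ℕ} (Γ : Matrix (Fin n) (Fin n) ℝ)
    (hoff : ∀ i j : Fin n, i ≠ j → 0 ≤ Γ i j)
    (hdiag : ∀ i : Fin n, Γ i i = -∑ j ∈ univ.erase i, Γ j i)
    (r : ℝ) (hr : 0 < r) (K : Fin n → ℝ) (hK : ∀ i, 0 < K i)
    (β : ℝ) (hβ : 0 ≤ β) (x : Fin n → ℝ) (hx : ∀ i, 0 < x i)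
    (heq : ∀ i, r * x i * (1 - x i / K i)
      + β * ∑ j ∈ univ.erase i, (Γ i j * x j - Γ j i * x i) = 0) :
    ∑ i, x i ≤ ∑ i, K i := by
  -- the migration terms cancel when summed over all patches
  have hcancel : ∑ i, ∑ j ∈ univ.erase i, (Γ i j * x j - Γ j i * x i) = 0 := by
    have hfull : ∀ i : Fin n, ∑ j ∈ univ.erase i, (Γ i j * x j - Γ j i * x i)
        = ∑ j, (Γ i j * x j - Γ j i * x i) := by
      intro i
      rw [← Finset.add_sum_erase univ _ (Finset.mem_univ i)]
      ring
    calc ∑ i, ∑ j ∈ univ.erase i, (Γ i j * x j - Γ j i * x i)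
        = ∑ i, ∑ j, (Γ i j * x j - Γ j i * x i) :=
          Finset.sum_congr rfl fun i _ => hfull i
      _ = (∑ i, ∑ j, Γ i j * x j) - (∑ i, ∑ j, Γ j i * x i) := by
          simp [Finset.sum_sub_distrib]
      _ = 0 := by
          rw [Finset.sum_comm (f := fun i j => Γ j i * x i)]
          ring
  have hsum : ∑ i, r * x i * (1 - x i / K i) = 0 := by
    have h1 : ∑ i, (r * x i * (1 - x i / K i)
        + β * ∑ j ∈ univ.erase i, (Γ i j * x j - Γ j i * x i)) = 0 :=
      Finset.sum_eq_zero fun i _ => heq i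
    rw [Finset.sum_add_distrib, ← Finset.mul_sum, hcancel, mul_zero, add_zero] at h1
    exact h1
  -- pointwise upper bound: r * x i * (1 - x i / K i) ≤ r * (K i - x i)
  have hpt : ∀ i, r * x i * (1 - x i / K i) ≤ r * (K i - x i) := by
    intro i
    have hKi := hK i
    have h2 : (0:ℝ) ≤ (K i - x i)^2 / K i := div_nonneg (sq_nonneg _) hKi.le
    have h3 : (K i - x i) - x i * (1 - x i / K i) = (K i - x i)^2 / K i := by
      field_simp
    nlinarith [hr.le]
  have h4 : 0 ≤ r * ∑ i, (K i - x i) := by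
    rw [Finset.mul_sum]
    calc (0:ℝ) = ∑ i, r * x i * (1 - x i / K i) := hsum.symm
      _ ≤ ∑ i, r * (K i - x i) := Finset.sum_le_sum fun i _ => hpt i
  have h5 : 0 ≤ ∑ i, (K i - x i) := nonneg_of_mul_nonneg_right h4 hr
  have h6 : ∑ i, (K i - x i) = ∑ i, K i - ∑ i, x i := Finset.sum_sub_distrib K x
  linarith
end

section
/- Let Γ be a migration matrix of size n, let r_i > 0, K_i > 0 and α_i = r_i/K_i for i = 1, …, n, and let β ≥ 0. If x is a positive equilibrium of the n-patch logistic system, then Σ_{i=1}^n x_i = Σ_{i=1}^n K_i + β Σ_{j<i} (γ_ij x_j - γ_ji x_i)(α_j x_j - α_i x_i)/(α_i α_j x_i x_j). -/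
open Finset

/-- For any positive equilibrium x of the n-patch logistic system,
Σ x_i = Σ K_i + β Σ_{j<i} (γ_ij x_j - γ_ji x_i)(α_j x_j - α_i x_i)/(α_i α_j x_i x_j),
where α_i = r_i/K_i. -/
theorem stmt_10 {n : ℕ} (Γ : Matrix (Fin n) (Fin n) ℝ)
    (hoff : ∀ i j : Fin n, i ≠ j → 0 ≤ Γ i j)
    (hdiag : ∀ i : Fin n, Γ i i = -∑ j ∈ univ.erase i, Γ j i)
    (r K : Fin n → ℝ) (hr : ∀ i, 0 < r i) (hK : ∀ i, 0 < K i)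
    (β : ℝ) (hβ : 0 ≤ β) (x : Fin n → ℝ) (hx : ∀ i, 0 < x i)
    (heq : ∀ i, r i * x i * (1 - x i / K i)
      + β * ∑ j ∈ univ.erase i, (Γ i j * x j - Γ j i * x i) = 0) :
    ∑ i, x i = ∑ i, K i
      + β * ∑ i, ∑ j ∈ univ.filter (fun j => j < i),
          (Γ i j * x j - Γ j i * x i) * ((r j / K j) * x j - (r i / K i) * x i)
            / ((r i / K i) * (r j / K j) * x i * x j) := by
  have hrne : ∀ i, r i ≠ 0 := fun i => (hr i).ne'
  have hKne : ∀ i, K i ≠ 0 := fun i => (hK i).ne'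
  have hxne : ∀ i, x i ≠ 0 := fun i => (hx i).ne'
  -- step 1: x i = K i + β * S i / (α i * x i)
  have step1 : ∀ i, x i = K i
      + β * ∑ j ∈ univ.erase i, ((Γ i j * x j - Γ j i * x i)
          / ((r i / K i) * x i)) := by
    intro i
    have hbS : β * ∑ j ∈ univ.erase i, (Γ i j * x j - Γ j i * x i)
        = -(r i * x i * (1 - x i / K i)) := by linarith [heq i]
    rw [← Finset.sum_div, ← mul_div_assoc, hbS]
    field_simp [hrne i, hKne i, hxne i]
    ring
  -- rewrite the LHS sum
  have hsum : ∑ i, x i = ∑ i, K i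
      + β * ∑ i, ∑ j ∈ univ.erase i, ((Γ i j * x j - Γ j i * x i)
          / ((r i / K i) * x i)) := by
    rw [Finset.mul_sum, ← Finset.sum_add_distrib]
    exact Finset.sum_congr rfl fun i _ => step1 i
  rw [hsum]
  congr 1
  congr 1
  -- step 2: regroup the double sum over ordered pairs
  set g : Fin n → Fin n → ℝ := fun i j =>
    (Γ i j * x j - Γ j i * x i) / ((r i / K i) * x i) with hg
  have hsplit : ∀ i : Fin n, ∑ j ∈ univ.erase i, g i j
      = (∑ j ∈ univ.filter (fun j => j < i), g i j)
        + ∑ j ∈ univ.filter (fun j => i < j), g i j := by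
    intro i
    rw [← Finset.sum_filter_add_sum_filter_not (univ.erase i) (fun j => j < i)]
    congr 1
    · congr 1
      ext j
      simp only [Finset.mem_filter, Finset.mem_erase, Finset.mem_univ, and_true,
        true_and]
      constructor
      · rintro ⟨_, h2⟩; exact h2
      · intro h; exact ⟨h.ne, h⟩
    · congr 1
      ext j
      simp only [Finset.mem_filter, Finset.mem_erase, Finset.mem_univ, and_true,
        true_and, not_lt]
      constructor
      · rintro ⟨h1, h2⟩; exact lt_of_le_of_ne h2 (Ne.symm h1)
      · intro h; exact ⟨h.ne', h.le⟩
  have hswap : ∑ i, ∑ j ∈ univ.filter (fun j => i < j), g i j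
      = ∑ i, ∑ j ∈ univ.filter (fun j => j < i), g j i := by
    refine Finset.sum_comm' fun a b => ?_
    simp only [Finset.mem_univ, Finset.mem_filter, true_and, and_true]
  calc ∑ i, ∑ j ∈ univ.erase i, g i j
      = ∑ i, ((∑ j ∈ univ.filter (fun j => j < i), g i j)
          + ∑ j ∈ univ.filter (fun j => i < j), g i j) :=
        Finset.sum_congr rfl fun i _ => hsplit i
    _ = (∑ i, ∑ j ∈ univ.filter (fun j => j < i), g i j)
          + ∑ i, ∑ j ∈ univ.filter (fun j => i < j), g i j :=
        Finset.sum_add_distrib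
    _ = ∑ i, ∑ j ∈ univ.filter (fun j => j < i), (g i j + g j i) := by
        rw [hswap, ← Finset.sum_add_distrib]
        exact Finset.sum_congr rfl fun i _ => (Finset.sum_add_distrib).symm
    _ = ∑ i, ∑ j ∈ univ.filter (fun j => j < i),
          (Γ i j * x j - Γ j i * x i) * ((r j / K j) * x j - (r i / K i) * x i)
            / ((r i / K i) * (r j / K j) * x i * x j) := by
        refine Finset.sum_congr rfl fun i _ => Finset.sum_congr rfl fun j _ => ?_
        simp only [hg]
        have hA : (r i / K i) * x i ≠ 0 :=
          mul_ne_zero (div_ne_zero (hrne i) (hKne i)) (hxne i)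
        have hB : (r j / K j) * x j ≠ 0 :=
          mul_ne_zero (div_ne_zero (hrne j) (hKne j)) (hxne j)
        have hC : (r i / K i) * (r j / K j) * x i * x j ≠ 0 :=
          mul_ne_zero (mul_ne_zero (mul_ne_zero (div_ne_zero (hrne i) (hKne i))
            (div_ne_zero (hrne j) (hKne j))) (hxne i)) (hxne j)
        rw [div_add_div _ _ hA hB, div_eq_div_iff (mul_ne_zero hA hB) hC]
        ring
end

section
/- Let Γ be a migration matrix of size n and let r_i > 0, K_i > 0 for i = 1, …, n. Suppose x : [0, ∞) → ℝ^n is a map such that x(0) = (K_1, …, K_n), for every β ≥ 0 the vector x(β) is a positive equilibrium of the n-patch logistic system with migration rate β, and x is differentiable (from the right) at β = 0. Then the right derivative at β = 0 of the total population β ↦ Σ_{i=1}^n x_i(β) equals Σ_{i=1}^n ( (1/r_i) Σ_{j=1}^n γ_ij K_j ). In particular, if Γ K = 0 for K = (K_1, …, K_n), this derivative is 0. -/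
open Finset

/-- If x(β) is a positive equilibrium for each β ≥ 0 with x(0) = K and
x is differentiable from the right at β = 0, then the right derivative at 0 of the
total population equals Σ_i (1/r_i) Σ_j γ_ij K_j; in particular it is 0 when ΓK = 0. -/
theorem stmt_12 {n : ℕ} (Γ : Matrix (Fin n) (Fin n) ℝ)
    (hoff : ∀ i j : Fin n, i ≠ j → 0 ≤ Γ i j)
    (hdiag : ∀ i : Fin n, Γ i i = -∑ j ∈ univ.erase i, Γ j i)
    (r K : Fin n → ℝ) (hr : ∀ i, 0 < r i) (hK : ∀ i, 0 < K i)
    (x : ℝ → Fin n → ℝ) (hx0 : x 0 = K)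
    (hx : ∀ β : ℝ, 0 ≤ β → (∀ i, 0 < x β i) ∧
      ∀ i, r i * x β i * (1 - x β i / K i)
        + β * ∑ j ∈ univ.erase i, (Γ i j * x β j - Γ j i * x β i) = 0)
    (hdiff : DifferentiableWithinAt ℝ x (Set.Ici 0) 0) :
    HasDerivWithinAt (fun β => ∑ i, x β i)
      (∑ i, (1 / r i) * ∑ j, Γ i j * K j) (Set.Ici 0) 0
    ∧ (Γ.mulVec K = 0 →
        HasDerivWithinAt (fun β => ∑ i, x β i) 0 (Set.Ici 0) 0) := by
  set S : ℝ → Fin n → ℝ :=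
    fun β i => ∑ j ∈ univ.erase i, (Γ i j * x β j - Γ j i * x β i) with hSdef
  -- continuity of each coordinate
  have hcont : ∀ i, Filter.Tendsto (fun β => x β i)
      (nhdsWithin 0 (Set.Ioi 0)) (nhds (K i)) := by
    intro i
    have h2 : Filter.Tendsto x (nhdsWithin 0 (Set.Ici 0)) (nhds (x 0)) :=
      hdiff.continuousWithinAt
    have h3 := ((continuous_apply i).tendsto (x 0)).comp h2
    rw [hx0] at h3
    exact h3.mono_left (nhdsWithin_mono _ Set.Ioi_subset_Ici_self)
  -- S tends to S0
  have hScont : ∀ i, Filter.Tendsto (fun β => S β i) (nhdsWithin 0 (Set.Ioi 0))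
      (nhds (∑ j ∈ univ.erase i, (Γ i j * K j - Γ j i * K i))) := by
    intro i
    apply tendsto_finset_sum
    intro j _
    exact ((hcont j).const_mul _).sub ((hcont i).const_mul _)
  -- S0 i equals full row sum
  have hS0 : ∀ i, (∑ j ∈ univ.erase i, (Γ i j * K j - Γ j i * K i))
      = ∑ j, Γ i j * K j := by
    intro i
    rw [← Finset.add_sum_erase (univ : Finset (Fin n)) (fun j => Γ i j * K j)
        (Finset.mem_univ i), hdiag i]
    rw [Finset.sum_sub_distrib, ← Finset.sum_mul]
    ring
  -- the quotient tends to the claimed limit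
  have hq : Filter.Tendsto (fun β => ∑ i, K i * S β i / (r i * x β i))
      (nhdsWithin 0 (Set.Ioi 0))
      (nhds (∑ i, (1 / r i) * ∑ j, Γ i j * K j)) := by
    apply tendsto_finset_sum
    intro i _
    have hne : r i * K i ≠ 0 := mul_ne_zero (hr i).ne' (hK i).ne'
    have h1 : Filter.Tendsto (fun β => K i * S β i / (r i * x β i))
        (nhdsWithin 0 (Set.Ioi 0))
        (nhds (K i * (∑ j ∈ univ.erase i, (Γ i j * K j - Γ j i * K i)) / (r i * K i))) :=
      (((hScont i).const_mul (K i)).div (((hcont i).const_mul (r i))) hne)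
    convert h1 using 2
    rw [hS0 i]
    have h2 := (hr i).ne'
    have h3 := (hK i).ne'
    field_simp
  -- slope equality on Ioi 0
  have hslope : ∀ β ∈ Set.Ioi (0:ℝ),
      slope (fun β => ∑ i, x β i) 0 β = ∑ i, K i * S β i / (r i * x β i) := by
    intro β hβ
    have hβ0 : (0:ℝ) < β := hβ
    have hxp := (hx β hβ0.le).1
    have heq := (hx β hβ0.le).2
    simp only [slope_def_field, sub_zero, hx0]
    rw [div_eq_iff hβ0.ne', Finset.sum_mul, ← Finset.sum_sub_distrib]
    apply Finset.sum_congr rfl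
    intro i _
    have hKi := (hK i).ne'
    have hxi := (hxp i).ne'
    have hri := (hr i).ne'
    have heqi := heq i
    rw [div_mul_eq_mul_div, eq_div_iff (mul_ne_zero hri hxi)]
    have hfull : (∑ j, Γ i j * x β j) - ∑ j, Γ j i * x β i = S β i := by
      simp only [hSdef]
      rw [Finset.sum_sub_distrib,
        ← Finset.add_sum_erase univ (fun j => Γ i j * x β j) (Finset.mem_univ i),
        ← Finset.add_sum_erase univ (fun j => Γ j i * x β i) (Finset.mem_univ i)]
      ring
    have hthis := heqi
    field_simp at hthis
    have hc : ∑ j ∈ univ.erase i, (Γ i j * x β j - x β i * Γ j i)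
        = (∑ j, Γ i j * x β j) - ∑ j, Γ j i * x β i := by
      rw [hfull]; simp only [hSdef]; exact Finset.sum_congr rfl (fun j _ => by ring)
    linear_combination (-1 : ℝ) * hthis + β * K i * hfull + K i * β * hc
  -- main derivative
  have hmain : HasDerivWithinAt (fun β => ∑ i, x β i)
      (∑ i, (1 / r i) * ∑ j, Γ i j * K j) (Set.Ici 0) 0 := by
    rw [hasDerivWithinAt_iff_tendsto_slope]
    have hset : Set.Ici (0:ℝ) \ {0} = Set.Ioi 0 := by
      ext y; simp [Set.mem_diff, lt_iff_le_and_ne, eq_comm]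
    rw [hset]
    exact hq.congr' (by
      filter_upwards [self_mem_nhdsWithin] with β hβ
      exact (hslope β hβ).symm)
  refine ⟨hmain, fun hΓK => ?_⟩
  have : (∑ i, (1 / r i) * ∑ j, Γ i j * K j) = 0 := by
    apply Finset.sum_eq_zero
    intro i _
    have : (Γ.mulVec K) i = 0 := by rw [hΓK]; rfl
    rw [Matrix.mulVec, dotProduct] at this
    simp only [this]
    ring
  rwa [this] at hmain
end

section
/- Let Γ be a migration matrix of size n and let r_i > 0, K_i > 0 for i = 1, …, n, and set K = (K_1, …, K_n). Then: (i) if Γ K = 0, then for every β ≥ 0 the vector K is a positive equilibrium of the n-patch logistic system with migration rate β; (ii) conversely, if a positive vector v ∈ ℝ^n is a positive equilibrium of the system for two distinct nonnegative values of the migration rate β, then v = K and Γ K = 0. -/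
open Finset

lemma mulVec_eq_sum {n : ℕ} (Γ : Matrix (Fin n) (Fin n) ℝ)
    (hdiag : ∀ i : Fin n, Γ i i = -∑ j ∈ univ.erase i, Γ j i)
    (x : Fin n → ℝ) (i : Fin n) :
    Γ.mulVec x i = ∑ j ∈ univ.erase i, (Γ i j * x j - Γ j i * x i) := by
  have h : Γ.mulVec x i = ∑ j, Γ i j * x j := rfl
  rw [h, ← Finset.add_sum_erase univ (fun j => Γ i j * x j) (mem_univ i),
    hdiag i, Finset.sum_sub_distrib, ← Finset.sum_mul]
  ring

/-- (i) If ΓK = 0, then K is a positive equilibrium of the n-patch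
logistic system for every β ≥ 0. (ii) Conversely, if a positive vector v is a
positive equilibrium for two distinct nonnegative migration rates, then v = K and
ΓK = 0. -/
theorem stmt_13 {n : ℕ} (Γ : Matrix (Fin n) (Fin n) ℝ)
    (hoff : ∀ i j : Fin n, i ≠ j → 0 ≤ Γ i j)
    (hdiag : ∀ i : Fin n, Γ i i = -∑ j ∈ univ.erase i, Γ j i)
    (r K : Fin n → ℝ) (hr : ∀ i, 0 < r i) (hK : ∀ i, 0 < K i) :
    (Γ.mulVec K = 0 → ∀ β : ℝ, 0 ≤ β → (∀ i, 0 < K i) ∧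
      ∀ i, r i * K i * (1 - K i / K i)
        + β * ∑ j ∈ univ.erase i, (Γ i j * K j - Γ j i * K i) = 0)
    ∧ (∀ v : Fin n → ℝ, (∀ i, 0 < v i) → ∀ β₁ β₂ : ℝ, 0 ≤ β₁ → 0 ≤ β₂ → β₁ ≠ β₂ →
        (∀ i, r i * v i * (1 - v i / K i)
          + β₁ * ∑ j ∈ univ.erase i, (Γ i j * v j - Γ j i * v i) = 0) →
        (∀ i, r i * v i * (1 - v i / K i)
          + β₂ * ∑ j ∈ univ.erase i, (Γ i j * v j - Γ j i * v i) = 0) →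
        v = K ∧ Γ.mulVec K = 0) := by
  constructor
  · intro hΓK β hβ
    refine ⟨hK, fun i => ?_⟩
    have h1 : ∑ j ∈ univ.erase i, (Γ i j * K j - Γ j i * K i) = 0 := by
      rw [← mulVec_eq_sum Γ hdiag K i, hΓK]; rfl
    rw [div_self (hK i).ne', h1]
    ring
  · intro v hv β₁ β₂ hβ₁ hβ₂ hne heq1 heq2
    have hS : ∀ i, ∑ j ∈ univ.erase i, (Γ i j * v j - Γ j i * v i) = 0 := by
      intro i
      have := sub_eq_zero.mpr ((heq1 i).trans (heq2 i).symm)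
      have h2 : (β₁ - β₂) * ∑ j ∈ univ.erase i, (Γ i j * v j - Γ j i * v i) = 0 := by
        linarith [this]
      exact (mul_eq_zero.mp h2).resolve_left (sub_ne_zero.mpr hne)
    have hvK : v = K := by
      funext i
      have h := heq1 i
      rw [hS i] at h
      have h3 : r i * v i * (1 - v i / K i) = 0 := by linarith
      have h4 : (1 - v i / K i) = 0 := by
        rcases mul_eq_zero.mp h3 with h5 | h5
        · exact absurd h5 (mul_pos (hr i) (hv i)).ne'
        · exact h5
      have : v i / K i = 1 := by linarith
      exact (div_eq_one_iff_eq (hK i).ne').mp this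
    subst hvK
    refine ⟨rfl, ?_⟩
    funext i
    rw [mulVec_eq_sum Γ hdiag v i, hS i]; rfl
end

section
/- Let Γ = (γ_ij) be a migration matrix of size n, partition {1, …, n} into I = {1, …, p} and J = {p+1, …, n} with q = n − p ≥ 1. Assume the two-blocks conditions: r_1 = … = r_p, K_1 = … = K_p, r_{p+1} = … = r_n, K_{p+1} = … = K_n (all r_i > 0, K_i > 0), and γ_1J = … = γ_pJ, γ_(p+1)I = … = γ_nI, T_1 = … = T_p, T_{p+1} = … = T_n. Let β ≥ 0 and suppose (a, b) ∈ ℝ² with a > 0, b > 0 satisfies p·r_1·a·(1 − a/K_1) + β(γ_IJ·b − γ_JI·a) = 0 and q·r_n·b·(1 − b/K_n) + β(γ_JI·a − γ_IJ·b) = 0. Then the vector x ∈ ℝ^n defined by x_i = a for i ∈ I and x_i = b for i ∈ J is a positive equilibrium of the n-patch logistic system with migration rate β. -/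
open Finset

/-- Block I = patches with index < p. -/
def blockI (p q : ℕ) : Finset (Fin (p + q)) := univ.filter (fun i => (i : ℕ) < p)

/-- Block J = patches with index ≥ p. -/
def blockJ (p q : ℕ) : Finset (Fin (p + q)) := univ.filter (fun i => p ≤ (i : ℕ))

/-- For i ∈ I, γ_iJ = Σ_{j∈J} γ_ij : the flux from block J to patch i. -/
noncomputable def gammaiJ {p q : ℕ} (Γ : Matrix (Fin (p + q)) (Fin (p + q)) ℝ)
    (i : Fin (p + q)) : ℝ := ∑ j ∈ blockJ p q, Γ i j

/-- For j ∈ J, γ_jI = Σ_{i∈I} γ_ji : the flux from block I to patch j. -/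
noncomputable def gammajI {p q : ℕ} (Γ : Matrix (Fin (p + q)) (Fin (p + q)) ℝ)
    (j : Fin (p + q)) : ℝ := ∑ i ∈ blockI p q, Γ j i

/-- For i ∈ I, T_i = Σ_{j∈J} γ_ji + Σ_{k∈I, k≠i} (γ_ki − γ_ik). -/
noncomputable def TI {p q : ℕ} (Γ : Matrix (Fin (p + q)) (Fin (p + q)) ℝ)
    (i : Fin (p + q)) : ℝ :=
  ∑ j ∈ blockJ p q, Γ j i + ∑ k ∈ (blockI p q).erase i, (Γ k i - Γ i k)

/-- For j ∈ J, T_j = Σ_{i∈I} γ_ij + Σ_{k∈J, k≠j} (γ_kj − γ_jk). -/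
noncomputable def TJ {p q : ℕ} (Γ : Matrix (Fin (p + q)) (Fin (p + q)) ℝ)
    (j : Fin (p + q)) : ℝ :=
  ∑ i ∈ blockI p q, Γ i j + ∑ k ∈ (blockJ p q).erase j, (Γ k j - Γ j k)

/-- γ_IJ = Σ_{i∈I, j∈J} γ_ij : the flux from block J to block I. -/
noncomputable def gammaIJ {p q : ℕ} (Γ : Matrix (Fin (p + q)) (Fin (p + q)) ℝ) : ℝ :=
  ∑ i ∈ blockI p q, ∑ j ∈ blockJ p q, Γ i j

/-- γ_JI = Σ_{i∈I, j∈J} γ_ji : the flux from block I to block J. -/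
noncomputable def gammaJI {p q : ℕ} (Γ : Matrix (Fin (p + q)) (Fin (p + q)) ℝ) : ℝ :=
  ∑ i ∈ blockI p q, ∑ j ∈ blockJ p q, Γ j i

/- On a vector equal to `a` on a block `s` and to `b` off it, the migration term at a patch
`i ∈ s` is `γ_iJ b - T_i a` (with `J` the other block). Summed over `s`, the within-block parts of
`T_i` cancel pairwise, so `∑_{i ∈ s} T_i` is the total rate of migration out of `s`. The two-blocks
conditions make `γ_iJ` and `T_i` constant on `s`, hence equal to these block totals divided by
`#s`, and the equation at patch `i` is the block equation for `(a, b)` divided by `#s`. -/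

namespace Finset

variable {ι : Type*} [DecidableEq ι]

theorem sum_sum_erase_sub_swap_eq_zero (s : Finset ι) (f : ι → ι → ℝ) :
    ∑ i ∈ s, ∑ k ∈ s.erase i, (f k i - f i k) = 0 := by
  have herase (i) (hi : i ∈ s) :
      ∑ k ∈ s.erase i, (f k i - f i k) = ∑ k ∈ s, (f k i - f i k) := by
    rw [sum_erase_eq_sub hi, sub_self, sub_zero]
  rw [sum_congr rfl herase]
  simp only [sum_sub_distrib]
  rw [sum_comm, sub_self]

theorem sum_univ_erase_eq_sum_erase_add_sum_compl [Fintype ι] {s : Finset ι} {i : ι} (hi : i ∈ s)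
    (f : ι → ℝ) : ∑ j ∈ univ.erase i, f j = ∑ j ∈ s.erase i, f j + ∑ j ∈ sᶜ, f j := by
  rw [sum_erase_eq_sub (mem_univ i), ← sum_add_sum_compl s, sum_erase_eq_sub hi]
  ring

end Finset

open Finset

section Migration

variable {ι : Type*} [Fintype ι] [DecidableEq ι]

/-- The coefficient `T_i` of the paper for a patch `i` of the block `s`; `TI` and `TJ` are its
instances for `s = I` and `s = J`. -/
def blockT (Γ : Matrix ι ι ℝ) (s : Finset ι) (i : ι) : ℝ :=
  ∑ j ∈ sᶜ, Γ j i + ∑ k ∈ s.erase i, (Γ k i - Γ i k)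

theorem sum_blockT (Γ : Matrix ι ι ℝ) (s : Finset ι) :
    ∑ i ∈ s, blockT Γ s i = ∑ i ∈ s, ∑ j ∈ sᶜ, Γ j i := by
  rw [← add_zero (∑ i ∈ s, ∑ j ∈ sᶜ, Γ j i), ← sum_sum_erase_sub_swap_eq_zero s Γ,
    ← sum_add_distrib]
  rfl

theorem sum_migration_of_blockwise_const (Γ : Matrix ι ι ℝ) {s : Finset ι} {i : ι} (hi : i ∈ s)
    {x : ι → ℝ} {a b : ℝ} (hxs : ∀ j ∈ s, x j = a) (hxc : ∀ j ∉ s, x j = b) :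
    ∑ j ∈ univ.erase i, (Γ i j * x j - Γ j i * x i)
      = (∑ j ∈ sᶜ, Γ i j) * b - blockT Γ s i * a := by
  have hin : ∑ j ∈ s.erase i, (Γ i j * x j - Γ j i * x i)
      = ∑ j ∈ s.erase i, (Γ i j - Γ j i) * a :=
    sum_congr rfl fun j hj => by rw [hxs j (mem_of_mem_erase hj), hxs i hi]; ring
  have hout : ∑ j ∈ sᶜ, (Γ i j * x j - Γ j i * x i) = ∑ j ∈ sᶜ, (Γ i j * b - Γ j i * a) :=
    sum_congr rfl fun j hj => by rw [hxc j (mem_compl.1 hj), hxs i hi]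
  rw [sum_univ_erase_eq_sum_erase_add_sum_compl hi, hin, hout, blockT]
  simp only [sum_sub_distrib, ← sum_mul]
  ring

theorem logistic_migration_eq_zero_of_block_eq_zero (Γ : Matrix ι ι ℝ) {s : Finset ι} {i : ι}
    (hi : i ∈ s) {r K x : ι → ℝ} {β a b : ℝ} (hxs : ∀ j ∈ s, x j = a) (hxc : ∀ j ∉ s, x j = b)
    (hrow : ∀ j ∈ s, ∑ k ∈ sᶜ, Γ j k = ∑ k ∈ sᶜ, Γ i k)
    (hT : ∀ j ∈ s, blockT Γ s j = blockT Γ s i)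
    (hblock : (#s : ℝ) * r i * a * (1 - a / K i)
      + β * ((∑ j ∈ s, ∑ k ∈ sᶜ, Γ j k) * b - (∑ j ∈ s, ∑ k ∈ sᶜ, Γ k j) * a) = 0) :
    r i * x i * (1 - x i / K i) + β * ∑ j ∈ univ.erase i, (Γ i j * x j - Γ j i * x i) = 0 := by
  have hrow_sum : ∑ j ∈ s, ∑ k ∈ sᶜ, Γ j k = #s * ∑ k ∈ sᶜ, Γ i k := by
    rw [sum_congr rfl hrow, sum_const, nsmul_eq_mul]
  have hT_sum : ∑ j ∈ s, ∑ k ∈ sᶜ, Γ k j = #s * blockT Γ s i := by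
    rw [← sum_blockT, sum_congr rfl hT, sum_const, nsmul_eq_mul]
  have hcard : (#s : ℝ) ≠ 0 := Nat.cast_ne_zero.2 (card_ne_zero_of_mem hi)
  rw [sum_migration_of_blockwise_const Γ hi hxs hxc, hxs i hi]
  refine (mul_eq_zero.1 ?_).resolve_left hcard
  rw [hrow_sum, hT_sum] at hblock
  linear_combination hblock

end Migration

@[simp]
theorem mem_blockI {p q : ℕ} {i : Fin (p + q)} : i ∈ blockI p q ↔ (i : ℕ) < p := by
  simp [blockI]

@[simp]
theorem mem_blockJ {p q : ℕ} {i : Fin (p + q)} : i ∈ blockJ p q ↔ p ≤ (i : ℕ) := by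
  simp [blockJ]

theorem compl_blockI (p q : ℕ) : (blockI p q)ᶜ = blockJ p q := by
  ext i; simp

theorem compl_blockJ (p q : ℕ) : (blockJ p q)ᶜ = blockI p q := by
  rw [← compl_blockI, compl_compl]

theorem TI_eq_blockT {p q : ℕ} (Γ : Matrix (Fin (p + q)) (Fin (p + q)) ℝ) (i : Fin (p + q)) :
    TI Γ i = blockT Γ (blockI p q) i := by
  rw [TI, blockT, compl_blockI]

theorem TJ_eq_blockT {p q : ℕ} (Γ : Matrix (Fin (p + q)) (Fin (p + q)) ℝ) (j : Fin (p + q)) :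
    TJ Γ j = blockT Γ (blockJ p q) j := by
  rw [TJ, blockT, compl_blockJ]

theorem card_blockI (p q : ℕ) : #(blockI p q) = p := by
  rw [blockI, Fin.card_filter_val_lt]; omega

theorem card_blockJ (p q : ℕ) : #(blockJ p q) = q := by
  rw [← compl_blockI, card_compl, Fintype.card_fin, card_blockI]; omega

/-- under the two-blocks conditions, if (a,b) with a,b > 0 satisfies
p r₁ a (1 − a/K₁) + β(γ_IJ b − γ_JI a) = 0 and
q rₙ b (1 − b/Kₙ) + β(γ_JI a − γ_IJ b) = 0, then the vector equal to a on block I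
and b on block J is a positive equilibrium of the n-patch logistic system. -/
theorem stmt_15 {p q : ℕ} (hp : 0 < p) (hq : 0 < q)
    (Γ : Matrix (Fin (p + q)) (Fin (p + q)) ℝ)
    (r K : Fin (p + q) → ℝ)
    (hrI : ∀ i ∈ blockI p q, ∀ i' ∈ blockI p q, r i = r i' ∧ K i = K i')
    (hrJ : ∀ j ∈ blockJ p q, ∀ j' ∈ blockJ p q, r j = r j' ∧ K j = K j')
    (hgI : ∀ i ∈ blockI p q, ∀ i' ∈ blockI p q, gammaiJ Γ i = gammaiJ Γ i')
    (hgJ : ∀ j ∈ blockJ p q, ∀ j' ∈ blockJ p q, gammajI Γ j = gammajI Γ j')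
    (hTI : ∀ i ∈ blockI p q, ∀ i' ∈ blockI p q, TI Γ i = TI Γ i')
    (hTJ : ∀ j ∈ blockJ p q, ∀ j' ∈ blockJ p q, TJ Γ j = TJ Γ j')
    (β : ℝ) (a b : ℝ) (ha : 0 < a) (hb : 0 < b)
    (heqa : (p : ℝ) * r ⟨0, by omega⟩ * a * (1 - a / K ⟨0, by omega⟩)
      + β * (gammaIJ Γ * b - gammaJI Γ * a) = 0)
    (heqb : (q : ℝ) * r ⟨p + q - 1, by omega⟩ * b * (1 - b / K ⟨p + q - 1, by omega⟩)
      + β * (gammaJI Γ * a - gammaIJ Γ * b) = 0) :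
    (∀ i, 0 < (if (i : ℕ) < p then a else b))
    ∧ ∀ i : Fin (p + q),
        r i * (if (i : ℕ) < p then a else b)
            * (1 - (if (i : ℕ) < p then a else b) / K i)
          + β * ∑ j ∈ univ.erase i,
              (Γ i j * (if (j : ℕ) < p then a else b)
                - Γ j i * (if (i : ℕ) < p then a else b)) = 0 := by
  refine ⟨fun i => by split_ifs <;> assumption, fun i => ?_⟩
  by_cases hi : (i : ℕ) < p
  · obtain ⟨hri, hKi⟩ := hrI ⟨0, by omega⟩ (mem_blockI.2 hp) i (mem_blockI.2 hi)
    refine logistic_migration_eq_zero_of_block_eq_zero Γ (s := blockI p q) (mem_blockI.2 hi)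
      (fun j hj => if_pos (mem_blockI.1 hj)) (fun j hj => if_neg (mt mem_blockI.2 hj))
      (by simpa [compl_blockI, gammaiJ] using fun j hj => hgI j hj i (mem_blockI.2 hi))
      (fun j hj => by rw [← TI_eq_blockT, ← TI_eq_blockT]; exact hTI j hj i (mem_blockI.2 hi)) ?_
    rw [card_blockI, ← hri, ← hKi, compl_blockI]
    exact heqa
  · have hiJ : i ∈ blockJ p q := mem_blockJ.2 (not_lt.1 hi)
    obtain ⟨hri, hKi⟩ := hrJ ⟨p + q - 1, by omega⟩ (mem_blockJ.2 (show p ≤ p + q - 1 by omega)) i hiJ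
    refine logistic_migration_eq_zero_of_block_eq_zero Γ (s := blockJ p q) hiJ
      (fun j hj => if_neg (not_lt.2 (mem_blockJ.1 hj)))
      (fun j hj => if_pos (not_le.1 (mt mem_blockJ.2 hj)))
      (by simpa [compl_blockJ, gammajI] using fun j hj => hgJ j hj i hiJ)
      (fun j hj => by rw [← TJ_eq_blockT, ← TJ_eq_blockT]; exact hTJ j hj i hiJ) ?_
    have hJI : gammaJI Γ = ∑ j ∈ blockJ p q, ∑ k ∈ blockI p q, Γ j k := sum_comm
    have hIJ : gammaIJ Γ = ∑ j ∈ blockJ p q, ∑ k ∈ blockI p q, Γ k j := sum_comm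
    rw [card_blockJ, ← hri, ← hKi, compl_blockJ, ← hJI, ← hIJ]
    exact heqb
end

section
/- Let Γ = (γ_ij) be an irreducible migration matrix of size n ≥ 2. Let L be the (n−1)×(n−1) matrix obtained from Γ by deleting its last row and last column, let V ∈ ℝ^{n−1} be the column vector with entries V_i = γ_in (i = 1, …, n−1), and let U be the (n−1)×(n−1) matrix all of whose columns equal V. Then every eigenvalue of the matrix 𝓛 = L − U has strictly negative real part; more precisely, the eigenvalues of 𝓛 are exactly the nonzero eigenvalues of Γ. -/
open Finset
open Polynomial Matrix


lemma col_sum_charmatrix {n : ℕ} (Γ : Matrix (Fin (n + 1)) (Fin (n + 1)) ℝ)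
    (hdiag : ∀ i : Fin (n + 1), Γ i i = -∑ j ∈ univ.erase i, Γ j i)
    (j : Fin (n + 1)) : ∑ k, charmatrix Γ k j = X := by
  rw [← Finset.add_sum_erase _ _ (Finset.mem_univ j), charmatrix_apply_eq]
  have h1 : ∑ k ∈ univ.erase j, charmatrix Γ k j = C (∑ k ∈ univ.erase j, Γ k j) * (-1) := by
    rw [map_sum, Finset.sum_mul]
    exact Finset.sum_congr rfl fun k hk => by
      rw [charmatrix_apply_ne _ _ _ (Finset.mem_erase.mp hk).1]; ring
  rw [h1, hdiag j, map_neg]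
  ring

lemma charpoly_factor {n : ℕ} (Γ : Matrix (Fin (n + 1)) (Fin (n + 1)) ℝ)
    (hdiag : ∀ i : Fin (n + 1), Γ i i = -∑ j ∈ univ.erase i, Γ j i) :
    Γ.charpoly = X * (Matrix.of fun i j : Fin n =>
        Γ i.castSucc j.castSucc - Γ i.castSucc (Fin.last n)).charpoly := by
  classical
  set M : Matrix (Fin (n + 1)) (Fin (n + 1)) ℝ[X] := charmatrix Γ with hM
  set E : Matrix (Fin (n + 1)) (Fin (n + 1)) ℝ[X] :=
    Matrix.of fun i j => if i = Fin.last n then 1 else if i = j then 1 else 0 with hE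
  set F : Matrix (Fin (n + 1)) (Fin (n + 1)) ℝ[X] :=
    Matrix.of fun i j => if i = j then 1 else if i = Fin.last n then -1 else 0 with hF
  have hdetE : E.det = 1 := by
    rw [Matrix.det_of_lowerTriangular E (fun i j h => ?_)]
    · exact Finset.prod_eq_one fun i _ => by simp [hE]
    · have hij : i < j := by simpa using h
      have h1 : i ≠ Fin.last n := fun hi => absurd (hi ▸ hij) (by simp [Fin.le_last, not_lt])
      have h2 : i ≠ j := ne_of_lt hij
      simp [hE, h1, h2]
  have hdetF : F.det = 1 := by
    rw [Matrix.det_of_lowerTriangular F (fun i j h => ?_)]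
    · exact Finset.prod_eq_one fun i _ => by simp [hF]
    · have hij : i < j := by simpa using h
      have h1 : i ≠ Fin.last n := fun hi => absurd (hi ▸ hij) (by simp [Fin.le_last, not_lt])
      have h2 : i ≠ j := ne_of_lt hij
      simp [hF, h1, h2]
  have hEM : ∀ i j, (E * M) i j = if i = Fin.last n then X else M i j := by
    intro i j
    rw [Matrix.mul_apply]
    by_cases hi : i = Fin.last n
    · subst hi
      rw [if_pos rfl]
      have h1 : ∀ k ∈ univ, E (Fin.last n) k * M k j = M k j := by
        intro k _; simp [hE]
      rw [Finset.sum_congr rfl h1, hM]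
      exact col_sum_charmatrix Γ hdiag j
    · rw [if_neg hi]
      have h1 : ∀ k ∈ univ, E i k * M k j = if k = i then M i j else 0 := by
        intro k _
        by_cases hk : k = i
        · subst hk; simp [hE, hi]
        · simp [hE, hi, Ne.symm hk, hk]
      rw [Finset.sum_congr rfl h1, Finset.sum_ite_eq' univ i]
      simp
  have hN : ∀ i j, (E * M * F) i j =
      if j = Fin.last n then (E * M) i (Fin.last n)
      else (E * M) i j - (E * M) i (Fin.last n) := by
    intro i j
    rw [Matrix.mul_apply]
    by_cases hj : j = Fin.last n
    · have h1 : ∀ k ∈ univ, (E * M) i k * F k j =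
          if k = Fin.last n then (E * M) i (Fin.last n) else 0 := by
        intro k _
        by_cases hk : k = Fin.last n <;> simp [hF, hk, hj]
      rw [Finset.sum_congr rfl h1, Finset.sum_ite_eq' univ (Fin.last n)]
      simp [hj]
    · have h1 : ∀ k ∈ univ, (E * M) i k * F k j =
          (if k = j then (E * M) i j else 0)
            + (if k = Fin.last n then -(E * M) i (Fin.last n) else 0) := by
        intro k _
        by_cases hk : k = j
        · subst hk; simp [hF, hj]
        · by_cases hkl : k = Fin.last n
          · subst hkl; simp [hF, hk, Ne.symm hj]
          · simp [hF, hk, hkl]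
      rw [Finset.sum_congr rfl h1, Finset.sum_add_distrib, Finset.sum_ite_eq' univ j,
        Finset.sum_ite_eq' univ (Fin.last n)]
      simp [hj, sub_eq_add_neg]
  have hdet : Γ.charpoly = (E * M * F).det := by
    rw [Matrix.det_mul, Matrix.det_mul, hdetE, hdetF, one_mul, mul_one]
    rfl
  have hNlast : ∀ j, (E * M * F) (Fin.last n) j = if j = Fin.last n then X else 0 := by
    intro j
    rw [hN]
    by_cases hj : j = Fin.last n <;> simp [hj, hEM]
  have hsub : ((E * M * F).submatrix (Fin.last n).succAbove (Fin.last n).succAbove) =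
      charmatrix (Matrix.of fun i j : Fin n =>
        Γ i.castSucc j.castSucc - Γ i.castSucc (Fin.last n)) := by
    refine Matrix.ext fun i j => ?_
    rw [Matrix.submatrix_apply]
    simp only [Fin.succAbove_last_apply]
    rw [hN, hEM, hEM]
    have hic : (i.castSucc : Fin (n + 1)) ≠ Fin.last n := (Fin.castSucc_lt_last i).ne
    have hjc : (j.castSucc : Fin (n + 1)) ≠ Fin.last n := (Fin.castSucc_lt_last j).ne
    rw [if_neg hjc, if_neg hic, if_neg hic, hM]
    by_cases hij : i = j
    · subst hij
      rw [charmatrix_apply_eq, charmatrix_apply_eq, charmatrix_apply_ne _ _ _ hic,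
        Matrix.of_apply, map_sub]
      ring
    · have hcc : (i.castSucc : Fin (n + 1)) ≠ j.castSucc :=
        fun h => hij (Fin.castSucc_injective n h)
      rw [charmatrix_apply_ne _ _ _ hcc, charmatrix_apply_ne _ _ _ hij,
        charmatrix_apply_ne _ _ _ hic, Matrix.of_apply, map_sub]
      ring
  rw [hdet, Matrix.det_succ_row _ (Fin.last n), Finset.sum_eq_single (Fin.last n) ?_ ?_]
  · rw [hNlast, if_pos rfl, hsub]
    have h2 : ((-1 : ℝ[X])) ^ ((Fin.last n : ℕ) + (Fin.last n : ℕ)) = 1 := by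
      rw [Fin.val_last]
      exact Even.neg_one_pow ⟨n, rfl⟩
    rw [h2, one_mul]
    rfl
  · intro j _ hj
    rw [hNlast, if_neg hj]
    ring
  · intro h
    exact absurd (Finset.mem_univ _) h

lemma detL_ne_zero {n : ℕ} (Γ : Matrix (Fin (n + 1)) (Fin (n + 1)) ℝ)
    (hoff : ∀ i j : Fin (n + 1), i ≠ j → 0 ≤ Γ i j)
    (hdiag : ∀ i : Fin (n + 1), Γ i i = -∑ j ∈ univ.erase i, Γ j i)
    (hirr : ∀ i j : Fin (n + 1), i ≠ j →
      Relation.TransGen (fun a b : Fin (n + 1) => 0 < Γ b a) i j) :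
    (Matrix.of fun i j : Fin n =>
      Γ i.castSucc j.castSucc - Γ i.castSucc (Fin.last n)).det ≠ 0 := by
  intro hdet
  obtain ⟨v, hv0, hv⟩ := (Matrix.exists_mulVec_eq_zero_iff).mpr hdet
  classical
  set w : Fin (n + 1) → ℝ := fun i => Fin.lastCases (-(∑ j, v j)) v i with hwdef
  have hwc : ∀ i : Fin n, w i.castSucc = v i := fun i => by
    simp [hwdef]
  have hwl : w (Fin.last n) = -(∑ j, v j) := by simp [hwdef]
  have hsum : ∑ i, w i = 0 := by
    rw [Fin.sum_univ_castSucc, hwl]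
    simp [hwc]
  have hcol : ∀ j, ∑ i, Γ i j = 0 := by
    intro j
    rw [← Finset.add_sum_erase _ _ (Finset.mem_univ j), hdiag j, neg_add_cancel]
  have hker1 : ∀ i : Fin n, ∑ j, Γ i.castSucc j * w j = 0 := by
    intro i
    have h1 : ∑ j : Fin n, (Γ i.castSucc j.castSucc - Γ i.castSucc (Fin.last n)) * v j = 0 := by
      have := congrFun hv i
      simpa [Matrix.mulVec, dotProduct] using this
    have h2 : ∑ j : Fin n, (Γ i.castSucc j.castSucc - Γ i.castSucc (Fin.last n)) * v j
        = ∑ j : Fin n, Γ i.castSucc j.castSucc * v j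
          - Γ i.castSucc (Fin.last n) * ∑ j, v j := by
      rw [Finset.mul_sum, ← Finset.sum_sub_distrib]
      exact Finset.sum_congr rfl fun j _ => by ring
    rw [Fin.sum_univ_castSucc, hwl]
    simp only [hwc]
    rw [h2] at h1
    linarith
  have htot : ∑ i, (∑ j, Γ i j * w j) = 0 := by
    rw [Finset.sum_comm]
    have : ∀ j ∈ univ, ∑ i, Γ i j * w j = (∑ i, Γ i j) * w j := by
      intro j _
      rw [Finset.sum_mul]
    rw [Finset.sum_congr rfl this]
    simp [hcol]
  have hker : ∀ i, ∑ j, Γ i j * w j = 0 := by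
    intro i
    induction i using Fin.lastCases with
    | last =>
      have := htot
      rw [Fin.sum_univ_castSucc] at this
      have hz : ∑ i : Fin n, (∑ j, Γ i.castSucc j * w j) = 0 :=
        Finset.sum_eq_zero fun i _ => hker1 i
      rw [hz, zero_add] at this
      exact this
    | cast i => exact hker1 i
  -- existence of positive and negative entries
  have hwne : ∃ i, w i ≠ 0 := by
    obtain ⟨i, hi⟩ := Function.ne_iff.mp hv0
    exact ⟨i.castSucc, by rw [hwc]; exact hi⟩
  obtain ⟨a, ha⟩ : ∃ a, 0 < w a := by
    by_contra h
    push_neg at h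
    obtain ⟨i, hi⟩ := hwne
    exact hi ((Finset.sum_eq_zero_iff_of_nonpos (fun i _ => h i)).mp hsum i (Finset.mem_univ i))
  obtain ⟨b, hb⟩ : ∃ b, w b < 0 := by
    by_contra h
    push_neg at h
    obtain ⟨i, hi⟩ := hwne
    exact hi ((Finset.sum_eq_zero_iff_of_nonneg (fun i _ => h i)).mp hsum i (Finset.mem_univ i))
  -- key: no flow from positive set to its complement
  set S : Finset (Fin (n + 1)) := univ.filter (fun i => 0 < w i) with hS
  have key : ∀ j, 0 < w j → ∀ i, ¬(0 < w i) → Γ i j = 0 := by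
    have htotS : ∑ j, (∑ i ∈ S, Γ i j) * w j = 0 := by
      have h1 : ∑ i ∈ S, (∑ j, Γ i j * w j) = 0 := Finset.sum_eq_zero fun i _ => hker i
      rw [Finset.sum_comm] at h1
      rw [← h1]
      exact Finset.sum_congr rfl fun j _ => (Finset.sum_mul _ _ _)
    have hterm : ∀ j ∈ univ, (∑ i ∈ S, Γ i j) * w j ≤ 0 := by
      intro j _
      by_cases hj : 0 < w j
      · have hsplit : ∑ i ∈ S, Γ i j + ∑ i ∈ univ.filter (fun i => ¬ 0 < w i), Γ i j
            = ∑ i, Γ i j := by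
          rw [hS]
          exact Finset.sum_filter_add_sum_filter_not univ _ _
        have hnn : 0 ≤ ∑ i ∈ univ.filter (fun i => ¬ 0 < w i), Γ i j := by
          refine Finset.sum_nonneg fun i hi => ?_
          have hiS : ¬ 0 < w i := (Finset.mem_filter.mp hi).2
          exact hoff i j (fun h => hiS (h ▸ hj))
        have hle : ∑ i ∈ S, Γ i j ≤ 0 := by
          rw [hcol j] at hsplit
          linarith
        exact mul_nonpos_of_nonpos_of_nonneg hle hj.le
      · push_neg at hj
        have hnn : 0 ≤ ∑ i ∈ S, Γ i j := by
          refine Finset.sum_nonneg fun i hi => ?_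
          have hi' : i ∈ univ.filter (fun i => 0 < w i) := by rwa [hS] at hi
          have hiS : 0 < w i := (Finset.mem_filter.mp hi').2
          refine hoff i j fun h => absurd (h ▸ hiS) (not_lt.mpr hj)
        exact mul_nonpos_of_nonneg_of_nonpos hnn hj
    have hall := (Finset.sum_eq_zero_iff_of_nonpos hterm).mp htotS
    intro j hj i hi
    have h1 : (∑ i ∈ S, Γ i j) * w j = 0 := hall j (Finset.mem_univ j)
    have h2 : ∑ i ∈ S, Γ i j = 0 :=
      (mul_eq_zero.mp h1).resolve_right (ne_of_gt hj)
    have hsplit : ∑ i ∈ S, Γ i j + ∑ i ∈ univ.filter (fun i => ¬ 0 < w i), Γ i j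
        = ∑ i, Γ i j := by
      rw [hS]
      exact Finset.sum_filter_add_sum_filter_not univ _ _
    have h3 : ∑ i ∈ univ.filter (fun i => ¬ 0 < w i), Γ i j = 0 := by
      rw [hcol j] at hsplit
      linarith
    have h4 : ∀ i ∈ univ.filter (fun i => ¬ 0 < w i), 0 ≤ Γ i j := by
      intro i hi
      have hiS : ¬ 0 < w i := (Finset.mem_filter.mp hi).2
      exact hoff i j (fun h => hiS (h ▸ hj))
    exact (Finset.sum_eq_zero_iff_of_nonneg h4).mp h3 i (Finset.mem_filter.mpr ⟨Finset.mem_univ i, hi⟩)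
  have hreach : ∀ x, Relation.TransGen (fun p q : Fin (n + 1) => 0 < Γ q p) a x → 0 < w x := by
    intro x hx
    induction hx with
    | single h =>
      by_contra hc
      exact (ne_of_gt h) (key a ha _ hc)
    | tail _ h ih =>
      by_contra hc
      exact (ne_of_gt h) (key _ ih _ hc)
  have hab : a ≠ b := by
    intro h
    rw [h] at ha
    linarith
  exact absurd (hreach b (hirr a b hab)) (not_lt.mpr hb.le)

lemma gersh_zero {n : ℕ} (Γ : Matrix (Fin (n + 1)) (Fin (n + 1)) ℝ)
    (hoff : ∀ i j : Fin (n + 1), i ≠ j → 0 ≤ Γ i j)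
    (hdiag : ∀ i : Fin (n + 1), Γ i i = -∑ j ∈ univ.erase i, Γ j i)
    (μ : ℂ) (hroot : (Γ.map (Complex.ofReal ·)).charpoly.IsRoot μ)
    (hre : 0 ≤ μ.re) : μ = 0 := by
  classical
  set A : Matrix (Fin (n + 1)) (Fin (n + 1)) ℂ := Γ.map (Complex.ofReal ·) with hA
  have hdet : (μ • (1 : Matrix (Fin (n + 1)) (Fin (n + 1)) ℂ) - A).det = 0 := by
    have h1 : ((charmatrix A).map (Polynomial.evalRingHom μ)).det = 0 := by
      rw [← RingHom.mapMatrix_apply, ← RingHom.map_det]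
      exact hroot
    have h2 : (charmatrix A).map (Polynomial.evalRingHom μ)
        = μ • (1 : Matrix (Fin (n + 1)) (Fin (n + 1)) ℂ) - A := by
      refine Matrix.ext fun i k => ?_
      by_cases hik : i = k
      · subst hik
        simp [charmatrix_apply_eq, Matrix.one_apply_eq]
      · simp [charmatrix_apply_ne _ _ _ hik, Matrix.one_apply_ne hik]
    rwa [h2] at h1
  obtain ⟨v, hv0, hv⟩ := (Matrix.exists_vecMul_eq_zero_iff).mpr hdet
  obtain ⟨j, -, hj'⟩ := Finset.exists_max_image univ (fun k => ‖v k‖)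
    Finset.univ_nonempty
  have hj : ∀ k, ‖v k‖ ≤ ‖v j‖ := fun k => hj' k (Finset.mem_univ k)
  have hvj : 0 < ‖v j‖ := by
    obtain ⟨k, hk⟩ := Function.ne_iff.mp hv0
    exact lt_of_lt_of_le (by simpa using hk) (hj k)
  have heig : ∑ i, v i * A i j = μ * v j := by
    have h1 := congrFun hv j
    simp only [Matrix.vecMul, dotProduct, Pi.zero_apply] at h1
    have h2 : ∀ i ∈ univ, v i * ((μ • (1 : Matrix (Fin (n + 1)) (Fin (n + 1)) ℂ) - A) i j)
        = (if i = j then μ * v j else 0) - v i * A i j := by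
      intro i _
      by_cases hij : i = j
      · subst hij
        rw [if_pos rfl]
        simp only [Matrix.sub_apply, Matrix.smul_apply, Matrix.one_apply_eq, smul_eq_mul]
        ring
      · simp only [Matrix.sub_apply, Matrix.smul_apply, Matrix.one_apply_ne hij, smul_eq_mul,
          if_neg hij]
        ring
    rw [Finset.sum_congr rfl h2, Finset.sum_sub_distrib, Finset.sum_ite_eq' univ j] at h1
    simp only [Finset.mem_univ, if_pos] at h1
    exact (sub_eq_zero.mp h1).symm
  have hsp : (μ - A j j) * v j = ∑ i ∈ univ.erase j, v i * A i j := by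
    rw [← Finset.add_sum_erase _ _ (Finset.mem_univ j)] at heig
    linear_combination -heig
  have habs : ‖μ - A j j‖ * ‖v j‖
      ≤ (∑ i ∈ univ.erase j, Γ i j) * ‖v j‖ := by
    rw [← norm_mul (μ - A j j) (v j), hsp]
    calc ‖∑ i ∈ univ.erase j, v i * A i j‖
        ≤ ∑ i ∈ univ.erase j, ‖v i * A i j‖ :=
          norm_sum_le _ _
      _ ≤ ∑ i ∈ univ.erase j, Γ i j * ‖v j‖ := by
          refine Finset.sum_le_sum fun i hi => ?_
          have hij : i ≠ j := (Finset.mem_erase.mp hi).1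
          have hΓ : 0 ≤ Γ i j := hoff i j hij
          rw [norm_mul]
          have hAij : ‖A i j‖ = Γ i j := by
            rw [hA]
            simp [Matrix.map_apply, Complex.norm_real, Real.norm_eq_abs, abs_of_nonneg hΓ]
          rw [hAij, mul_comm]
          exact mul_le_mul_of_nonneg_left (hj i) hΓ
      _ = (∑ i ∈ univ.erase j, Γ i j) * ‖v j‖ := by
          rw [Finset.sum_mul]
  have hbound : ‖μ - A j j‖ ≤ ∑ i ∈ univ.erase j, Γ i j :=
    le_of_mul_le_mul_right habs hvj
  set c : ℝ := Γ j j with hc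
  have hcle : c ≤ 0 := by
    rw [hc, hdiag j]
    refine neg_nonpos_of_nonneg (Finset.sum_nonneg fun i hi => ?_)
    exact hoff i j (Finset.mem_erase.mp hi).1
  have hsum : ∑ i ∈ univ.erase j, Γ i j = -c := by
    rw [hc]
    have := hdiag j
    linarith
  have hAjj : A j j = (c : ℂ) := by
    rw [hA, hc]
    simp [Matrix.map_apply]
  rw [hsum, hAjj] at hbound
  have h3 : ‖μ - (c : ℂ)‖ ^ 2 ≤ (-c) ^ 2 := by
    have h0 : (0:ℝ) ≤ ‖μ - (c : ℂ)‖ := norm_nonneg _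
    nlinarith
  rw [Complex.sq_norm, Complex.normSq_apply] at h3
  simp only [Complex.sub_re, Complex.sub_im, Complex.ofReal_re, Complex.ofReal_im, sub_zero] at h3
  have hre0 : μ.re = 0 := by
    nlinarith [sq_nonneg μ.im, sq_nonneg μ.re, mul_nonneg hre (neg_nonneg.mpr hcle)]
  have him0 : μ.im = 0 := by
    nlinarith [sq_nonneg μ.re, mul_nonneg hre (neg_nonneg.mpr hcle)]
  exact Complex.ext hre0 him0

/-- for an irreducible migration matrix Γ of size n+1 ≥ 2, the matrix
𝓛 = L − U (L the top-left n×n block of Γ, U the matrix whose columns all equal the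
last column of Γ restricted to the first n rows) has all its eigenvalues (over ℂ) of
strictly negative real part; more precisely, its eigenvalues are exactly the nonzero
eigenvalues of Γ. -/
theorem stmt_17 {n : ℕ} (hn : 1 ≤ n) (Γ : Matrix (Fin (n + 1)) (Fin (n + 1)) ℝ)
    (hoff : ∀ i j : Fin (n + 1), i ≠ j → 0 ≤ Γ i j)
    (hdiag : ∀ i : Fin (n + 1), Γ i i = -∑ j ∈ univ.erase i, Γ j i)
    (hirr : ∀ i j : Fin (n + 1), i ≠ j →
      Relation.TransGen (fun a b : Fin (n + 1) => 0 < Γ b a) i j) :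
    (∀ μ : ℂ,
      ((Matrix.of fun i j : Fin n =>
          Γ i.castSucc j.castSucc - Γ i.castSucc (Fin.last n)).map
            (Complex.ofReal ·)).charpoly.IsRoot μ → μ.re < 0)
    ∧ (∀ μ : ℂ,
      ((Matrix.of fun i j : Fin n =>
          Γ i.castSucc j.castSucc - Γ i.castSucc (Fin.last n)).map
            (Complex.ofReal ·)).charpoly.IsRoot μ ↔
        (μ ≠ 0 ∧ (Γ.map (Complex.ofReal ·)).charpoly.IsRoot μ)) := by
  classical
  set L : Matrix (Fin n) (Fin n) ℝ :=
    Matrix.of fun i j : Fin n => Γ i.castSucc j.castSucc - Γ i.castSucc (Fin.last n) with hL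
  have hfac : Γ.charpoly = X * L.charpoly := charpoly_factor Γ hdiag
  have hmapL : L.map (Complex.ofReal ·) = L.map (Complex.ofRealHom : ℝ →+* ℂ) := rfl
  have hmapΓ : Γ.map (Complex.ofReal ·) = Γ.map (Complex.ofRealHom : ℝ →+* ℂ) := rfl
  have hfacC : (Γ.map (Complex.ofReal ·)).charpoly
      = X * (L.map (Complex.ofReal ·)).charpoly := by
    rw [hmapL, hmapΓ, Matrix.charpoly_map, Matrix.charpoly_map, hfac, Polynomial.map_mul,
      Polynomial.map_X]
  have hdetL : L.det ≠ 0 := detL_ne_zero Γ hoff hdiag hirr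
  have hdetLC : (L.map (Complex.ofReal ·)).det ≠ 0 := by
    rw [hmapL, ← RingHom.mapMatrix_apply, ← RingHom.map_det]
    exact fun h => hdetL (Complex.ofReal_eq_zero.mp h)
  have h0 : ¬ (L.map (Complex.ofReal ·)).charpoly.IsRoot 0 := by
    intro h
    apply hdetLC
    rw [Matrix.det_eq_sign_charpoly_coeff, Polynomial.coeff_zero_eq_eval_zero,
      Polynomial.IsRoot] at *
    rw [h, mul_zero]
  have hiff : ∀ μ : ℂ, (L.map (Complex.ofReal ·)).charpoly.IsRoot μ ↔
      μ ≠ 0 ∧ (Γ.map (Complex.ofReal ·)).charpoly.IsRoot μ := by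
    intro μ
    constructor
    · intro h
      refine ⟨fun h0' => h0 (h0' ▸ h), ?_⟩
      rw [Polynomial.IsRoot, hfacC, Polynomial.eval_mul, Polynomial.eval_X, h, mul_zero]
    · rintro ⟨hμ, h⟩
      rw [Polynomial.IsRoot, hfacC, Polynomial.eval_mul, Polynomial.eval_X] at h
      exact (mul_eq_zero.mp h).resolve_left hμ
  refine ⟨fun μ h => ?_, hiff⟩
  obtain ⟨hμ, hroot⟩ := (hiff μ).mp h
  by_contra hre
  push_neg at hre
  exact hμ (gersh_zero Γ hoff hdiag μ hroot hre)
end
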